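/- arXiv:2201.03912 — 9 statements merged into one kernel-verified Lean document; each statement's English description precedes it below -/
import Mathlib

section
/- Let G be a finite abelian group, f: G → ℝ nonnegative with square root h = √f having Fourier coefficients a_χ, and Q₀(χ,χ') = conj(a_χ)a_{χ'}. Then for every Gram matrix Q of f, Q(χ₀,χ₀) ≤ Q₀(χ₀,χ₀), i.e., Q₀ maximizes the (χ₀,χ₀)-entry over all Gram matrices of f. -/
open scoped BigOperators ComplexOrder

/-- The rank-one Gram matrix `Q₀` built from the Fourier coefficients of the square root of
`f` maximizes the entry at the trivial character over all Gram matrices of `f`. -/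
theorem sqrt_gram_maximizes_trivial_entry
    (G : Type*) [CommGroup G] [Fintype G] [Fintype (G →* ℂˣ)]
    (f : G → ℝ) (hf : ∀ x, 0 ≤ f x)
    (h : G → ℝ) (hh : ∀ x, h x = Real.sqrt (f x))
    (a : (G →* ℂˣ) → ℂ)
    (ha : ∀ χ : G →* ℂˣ,
      a χ = (1 / (Fintype.card G : ℂ)) * ∑ x : G, (h x : ℂ) * (starRingEnd ℂ) ((χ x : ℂˣ) : ℂ))
    (Q₀ : Matrix (G →* ℂˣ) (G →* ℂˣ) ℂ)
    (hQ₀ : ∀ χ χ' : G →* ℂˣ, Q₀ χ χ' = (starRingEnd ℂ) (a χ) * a χ')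
    (Q : Matrix (G →* ℂˣ) (G →* ℂˣ) ℂ) (hQ : Q.PosSemidef)
    (hGram : ∀ x : G, (f x : ℂ) =
      ∑ χ : G →* ℂˣ, ∑ χ' : G →* ℂˣ,
        Q χ χ' * (((χ x : ℂˣ) : ℂ))⁻¹ * ((χ' x : ℂˣ) : ℂ)) :
    (Q 1 1).re ≤ (Q₀ 1 1).re := by
  classical
  obtain ⟨B, hB⟩ : ∃ B : Matrix (G →* ℂˣ) (G →* ℂˣ) ℂ, Q = B.conjTranspose * B := by
    open scoped MatrixOrder in exact CStarAlgebra.nonneg_iff_eq_star_mul_self.mp hQ.nonneg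
  set N := Fintype.card G with hN
  have hNpos : 0 < N := Fintype.card_pos
  have hN0 : (N : ℝ) ≠ 0 := Nat.cast_ne_zero.mpr hNpos.ne'
  have hnorm : ∀ (χ : G →* ℂˣ) (x : G), ‖((χ x : ℂˣ) : ℂ)‖ = 1 := by
    intro χ x
    refine Complex.norm_eq_one_of_pow_eq_one (n := N) ?_ hNpos.ne'
    rw [← Units.val_pow_eq_pow_val, ← map_pow, hN, pow_card_eq_one, map_one, Units.val_one]
  have hinv : ∀ (χ : G →* ℂˣ) (x : G),
      (((χ x : ℂˣ) : ℂ))⁻¹ = (starRingEnd ℂ) ((χ x : ℂˣ) : ℂ) := fun χ x =>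
    Complex.inv_eq_conj (hnorm χ x)
  let W : G → EuclideanSpace ℂ (G →* ℂˣ) := fun x => WithLp.toLp 2 fun i => ∑ χ, B i χ * ((χ x : ℂˣ) : ℂ)
  have hQentry : ∀ χ χ', Q χ χ' = ∑ i, (starRingEnd ℂ) (B i χ) * B i χ' := by
    intro χ χ'
    rw [hB]
    simp [Matrix.mul_apply, Matrix.conjTranspose_apply]
  have hfW : ∀ x, (f x : ℂ) = ∑ i, (starRingEnd ℂ) (W x i) * W x i := by
    intro x
    have e1 : ∀ i : G →* ℂˣ, (starRingEnd ℂ) (W x i) * W x i =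
        ∑ χ : G →* ℂˣ, ∑ χ' : G →* ℂˣ,
          ((starRingEnd ℂ) (B i χ) * B i χ') * (((χ x : ℂˣ) : ℂ))⁻¹ * ((χ' x : ℂˣ) : ℂ) := by
      intro i
      simp only [W, map_sum, map_mul, Finset.sum_mul, Finset.mul_sum, hinv]
      conv_lhs => rw [Finset.sum_comm]
      exact Finset.sum_congr rfl fun χ _ => Finset.sum_congr rfl fun χ' _ => by ring
    have e2 : ∑ i, (starRingEnd ℂ) (W x i) * W x i =
        ∑ χ : G →* ℂˣ, ∑ χ' : G →* ℂˣ,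
          Q χ χ' * (((χ x : ℂˣ) : ℂ))⁻¹ * ((χ' x : ℂˣ) : ℂ) := by
      calc ∑ i, (starRingEnd ℂ) (W x i) * W x i
          = ∑ i : G →* ℂˣ, ∑ χ : G →* ℂˣ, ∑ χ' : G →* ℂˣ,
              ((starRingEnd ℂ) (B i χ) * B i χ') * (((χ x : ℂˣ) : ℂ))⁻¹ * ((χ' x : ℂˣ) : ℂ) :=
            Finset.sum_congr rfl fun i _ => e1 i
        _ = ∑ χ : G →* ℂˣ, ∑ i : G →* ℂˣ, ∑ χ' : G →* ℂˣ,
              ((starRingEnd ℂ) (B i χ) * B i χ') * (((χ x : ℂˣ) : ℂ))⁻¹ * ((χ' x : ℂˣ) : ℂ) :=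
            Finset.sum_comm
        _ = ∑ χ : G →* ℂˣ, ∑ χ' : G →* ℂˣ, ∑ i : G →* ℂˣ,
              ((starRingEnd ℂ) (B i χ) * B i χ') * (((χ x : ℂˣ) : ℂ))⁻¹ * ((χ' x : ℂˣ) : ℂ) :=
            Finset.sum_congr rfl fun χ _ => Finset.sum_comm
        _ = ∑ χ : G →* ℂˣ, ∑ χ' : G →* ℂˣ,
              Q χ χ' * (((χ x : ℂˣ) : ℂ))⁻¹ * ((χ' x : ℂˣ) : ℂ) := by
            refine Finset.sum_congr rfl fun χ _ => Finset.sum_congr rfl fun χ' _ => ?_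
            rw [hQentry, Finset.sum_mul, Finset.sum_mul]
    rw [hGram x, ← e2]
  have hfW' : ∀ x, f x = ∑ i, ‖W x i‖ ^ 2 := by
    intro x
    have := hfW x
    simp only [Complex.conj_mul'] at this
    rw [← Complex.ofReal_inj]
    push_cast
    simpa using this
  have hhW : ∀ x, h x = ‖W x‖ := by
    intro x
    rw [hh, hfW' x, EuclideanSpace.norm_eq]
  have horth : ∀ χ : G →* ℂˣ, χ ≠ 1 → ∑ x : G, ((χ x : ℂˣ) : ℂ) = 0 := by
    intro χ hχ
    obtain ⟨y, hy⟩ : ∃ y, χ y ≠ 1 := by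
      by_contra h'
      push_neg at h'
      exact hχ (MonoidHom.ext fun y => h' y)
    have h1 : ((χ y : ℂˣ) : ℂ) ≠ 1 := fun hc => hy (Units.ext hc)
    have h2 : ((χ y : ℂˣ) : ℂ) * ∑ x : G, ((χ x : ℂˣ) : ℂ) = ∑ x : G, ((χ x : ℂˣ) : ℂ) := by
      rw [Finset.mul_sum]
      refine Fintype.sum_equiv (Equiv.mulLeft y) _ _ fun x => ?_
      rw [Equiv.coe_mulLeft, map_mul, Units.val_mul]
    have h3 := sub_eq_zero.mpr h2
    rw [← sub_one_mul] at h3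
    rcases mul_eq_zero.mp h3 with hc | hc
    · exact absurd (sub_eq_zero.mp hc) h1
    · exact hc
  let c : EuclideanSpace ℂ (G →* ℂˣ) := WithLp.toLp 2 fun i => B i 1
  have hsum : ∑ x : G, W x = (N : ℂ) • c := by
    ext i
    have happ : (∑ x : G, W x) i = ∑ x : G, W x i := by rw [WithLp.ofLp_sum, Finset.sum_apply]
    rw [happ]
    simp only [W]
    rw [Finset.sum_comm]
    have e : ∀ χ : G →* ℂˣ, ∑ x : G, B i χ * ((χ x : ℂˣ) : ℂ)
        = B i χ * ∑ x : G, ((χ x : ℂˣ) : ℂ) := fun χ => by rw [Finset.mul_sum]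
    rw [Finset.sum_congr rfl fun χ _ => e χ, Finset.sum_eq_single 1]
    · simp [c, hN, mul_comm, PiLp.smul_apply, smul_eq_mul]
    · intro χ _ hχ
      rw [horth χ hχ, mul_zero]
    · simp
  have ha1 : a 1 = (((1 / (N:ℝ)) * ∑ x : G, h x : ℝ) : ℂ) := by
    rw [ha 1]
    push_cast
    congr 1
    exact Finset.sum_congr rfl fun x _ => by simp
  have hcnorm : (N : ℝ) * ‖c‖ = ‖∑ x : G, W x‖ := by
    rw [hsum, norm_smul]
    simp
  have htri : ‖∑ x : G, W x‖ ≤ ∑ x : G, ‖W x‖ := norm_sum_le _ _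
  have hQ11 : (Q 1 1).re = ‖c‖ ^ 2 := by
    rw [hQentry 1 1, EuclideanSpace.norm_eq, Real.sq_sqrt (by positivity), Complex.re_sum]
    refine Finset.sum_congr rfl fun i _ => ?_
    rw [Complex.conj_mul']
    simp [c, ← Complex.ofReal_pow]
  have hQ011 : (Q₀ 1 1).re = ((1 / (N:ℝ)) * ∑ x : G, h x) ^ 2 := by
    rw [hQ₀ 1 1, ha1, Complex.conj_ofReal, ← Complex.ofReal_mul, Complex.ofReal_re, sq]
  have hsum_h : ∑ x : G, h x = ∑ x : G, ‖W x‖ := Finset.sum_congr rfl fun x _ => hhW x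
  have hc : ‖c‖ ≤ (1 / (N:ℝ)) * ∑ x : G, h x := by
    have hcn : ‖c‖ = (1 / (N:ℝ)) * ‖∑ x : G, W x‖ := by
      rw [← hcnorm]
      field_simp
    rw [hcn, hsum_h]
    exact mul_le_mul_of_nonneg_left htri (by positivity)
  rw [hQ11, hQ011]
  have hr : 0 ≤ (1 / (N:ℝ)) * ∑ x : G, h x := le_trans (norm_nonneg c) hc
  exact pow_le_pow_left₀ (norm_nonneg c) hc 2
end

section
/- Let G be a finite abelian group and S ⊆ Ĝ a symmetric subset containing the trivial character χ₀. If f(x) = ∑_{χ∈S} a_χ χ(x) is a real-valued function on G with a_{χ₀} ≥ ∑_{χ∈S, χ≠χ₀} |a_χ|, then f admits a Gram matrix Q (positive semidefinite, representing f) whose nonzero entries lie only in rows and columns indexed by characters in S; in particular f is a sum of Hermitian squares with Fourier support contained in S. -/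
open scoped BigOperators ComplexOrder

set_option linter.unusedSectionVars false

namespace SGAux
variable {G : Type*} [CommGroup G] [Fintype G] [Fintype (G →* ℂˣ)] [DecidableEq (G →* ℂˣ)]

lemma char_abs (χ : G →* ℂˣ) (x : G) : ‖((χ x : ℂˣ) : ℂ)‖ = 1 := by
  refine Complex.norm_eq_one_of_pow_eq_one (n := Fintype.card G) ?_ Fintype.card_ne_zero
  rw [← Units.val_pow_eq_pow_val, ← map_pow, pow_card_eq_one, map_one, Units.val_one]

lemma char_conj (χ : G →* ℂˣ) (x : G) :
    (starRingEnd ℂ) ((χ x : ℂˣ) : ℂ) = (((χ x : ℂˣ) : ℂ))⁻¹ :=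
  (Complex.inv_eq_conj (char_abs χ x)).symm

lemma char_inv_apply (χ : G →* ℂˣ) (x : G) :
    ((χ⁻¹ x : ℂˣ) : ℂ) = (((χ x : ℂˣ) : ℂ))⁻¹ := by
  simp

lemma char_sum_zero (χ : G →* ℂˣ) (h : χ ≠ 1) :
    ∑ x : G, ((χ x : ℂˣ) : ℂ) = 0 := by
  obtain ⟨y, hy⟩ := DFunLike.ne_iff.mp h
  have hy' : ((χ y : ℂˣ) : ℂ) ≠ 1 := by
    simp only [MonoidHom.one_apply] at hy
    exact fun hc => hy (Units.ext (by simpa using hc))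
  have key : ((χ y : ℂˣ) : ℂ) * ∑ x : G, ((χ x : ℂˣ) : ℂ) = ∑ x : G, ((χ x : ℂˣ) : ℂ) := by
    rw [Finset.mul_sum]
    exact Fintype.sum_equiv (Equiv.mulLeft y) _ _ (fun x => by simp [← Units.val_mul, ← map_mul])
  have h0 : (((χ y : ℂˣ) : ℂ) - 1) * ∑ x : G, ((χ x : ℂˣ) : ℂ) = 0 := by
    rw [sub_one_mul, key, sub_self]
  rcases mul_eq_zero.mp h0 with h1 | h2
  · exact absurd (sub_eq_zero.mp h1) hy'
  · exact h2

lemma char_sum_inv_zero (χ : G →* ℂˣ) (h : χ ≠ 1) :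
    ∑ x : G, (((χ x : ℂˣ) : ℂ))⁻¹ = 0 := by
  have := char_sum_zero χ⁻¹ (fun hc => h (by
    ext y; have := congrArg (fun φ : G →* ℂˣ => ((φ y : ℂˣ) : ℂ)) hc; simpa using this))
  simpa [char_inv_apply] using this

lemma char_sum_mul_inv_zero (ψ χ : G →* ℂˣ) (h : ψ ≠ χ) :
    ∑ x : G, ((ψ x : ℂˣ) : ℂ) * (((χ x : ℂˣ) : ℂ))⁻¹ = 0 := by
  have := char_sum_zero (ψ * χ⁻¹) (by
    intro hc; exact h (mul_inv_eq_one.mp hc))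
  simpa [char_inv_apply] using this

noncomputable def cc (a : (G →* ℂˣ) → ℂ) (χ : G →* ℂˣ) : ℝ :=
  Real.sqrt (‖a χ‖ / 2)

noncomputable def dd (a : (G →* ℂˣ) → ℂ) (χ : G →* ℂˣ) : ℂ :=
  a χ / ‖a χ‖ * cc a χ

noncomputable def ee (a : (G →* ℂˣ) → ℂ) (S : Finset (G →* ℂˣ)) : ℝ :=
  Real.sqrt ((a 1).re - ∑ χ ∈ S.erase 1, ‖a χ‖)

noncomputable def BB (a : (G →* ℂˣ) → ℂ) (S : Finset (G →* ℂˣ)) :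
    Matrix (G →* ℂˣ) (G →* ℂˣ) ℂ := fun ψ χ =>
  (if ψ ∈ S.erase 1 ∧ χ = 1 then (cc a ψ : ℂ) else 0) +
  (if ψ ∈ S.erase 1 ∧ χ = ψ then dd a ψ else 0) +
  (if ψ = 1 ∧ χ = 1 then (ee a S : ℂ) else 0)

noncomputable def gg (a : (G →* ℂˣ) → ℂ) (S : Finset (G →* ℂˣ)) (ψ : G →* ℂˣ) (x : G) : ℂ :=
  if ψ ∈ S.erase 1 then (cc a ψ : ℂ) + dd a ψ * ((ψ x : ℂˣ) : ℂ)
  else if ψ = 1 then (ee a S : ℂ) else 0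

lemma sum_BB (a : (G →* ℂˣ) → ℂ) (S : Finset (G →* ℂˣ)) (ψ : G →* ℂˣ) (x : G) :
    ∑ χ : G →* ℂˣ, BB a S ψ χ * ((χ x : ℂˣ) : ℂ) = gg a S ψ x := by
  by_cases hψ : ψ ∈ S.erase 1
  · have hψ1 : ψ ≠ 1 := (Finset.mem_erase.mp hψ).1
    simp [BB, gg, hψ, hψ1, add_mul, ite_mul, Finset.sum_add_distrib]
  · by_cases hψ1 : ψ = 1
    · simp [BB, gg, hψ, hψ1, add_mul, ite_mul, Finset.sum_add_distrib]
    · simp [BB, gg, hψ, hψ1, add_mul, ite_mul, Finset.sum_add_distrib]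

lemma BB_ne_zero (a : (G →* ℂˣ) → ℂ) (S : Finset (G →* ℂˣ)) (h1 : (1:G →* ℂˣ) ∈ S)
    (ψ χ : G →* ℂˣ) (h : BB a S ψ χ ≠ 0) : χ ∈ S := by
  by_contra hχ
  have hχ1 : χ ≠ 1 := fun hc => hχ (hc ▸ h1)
  have hχψ : ¬(ψ ∈ S.erase 1 ∧ χ = ψ) := by
    rintro ⟨hm, rfl⟩
    exact hχ (Finset.mem_of_mem_erase hm)
  simp [BB, hχ1, hχψ] at h
  exact hχ (by rw [h.2.2.1]; exact h.2.1)

lemma conj_gg_mul (a : (G →* ℂˣ) → ℂ) (S : Finset (G →* ℂˣ)) (ψ : G →* ℂˣ)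
    (hψ : ψ ∈ S.erase 1) (x : G) :
    (starRingEnd ℂ) (gg a S ψ x) * gg a S ψ x
      = (‖a ψ‖ : ℂ)
        + (a ψ * ((ψ x : ℂˣ) : ℂ) + (starRingEnd ℂ) (a ψ) * (((ψ x : ℂˣ) : ℂ))⁻¹) / 2 := by
  rcases eq_or_ne (a ψ) 0 with h0 | h0
  · simp [gg, hψ, cc, dd, h0]
  · have hz0 : ((ψ x : ℂˣ) : ℂ) ≠ 0 := Units.ne_zero _
    have hzc : (starRingEnd ℂ) ((ψ x : ℂˣ) : ℂ) = (((ψ x : ℂˣ) : ℂ))⁻¹ := char_conj ψ x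
    have hr0 : (‖a ψ‖ : ℂ) ≠ 0 := by
      simpa using h0
    have hc2 : (cc a ψ : ℂ) * (cc a ψ : ℂ) = (‖a ψ‖ : ℂ) / 2 := by
      rw [← Complex.ofReal_mul, cc, Real.mul_self_sqrt (by positivity)]
      push_cast; ring
    have haa : (starRingEnd ℂ) (a ψ) * a ψ
        = (‖a ψ‖ : ℂ) * (‖a ψ‖ : ℂ) := by
      rw [mul_comm, Complex.mul_conj, Complex.normSq_eq_norm_sq]
      push_cast; ring
    have hdd : (starRingEnd ℂ) (dd a ψ) = (starRingEnd ℂ) (a ψ) / (‖a ψ‖ : ℂ) * (cc a ψ : ℂ) := by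
      simp [dd, map_div₀, map_mul, Complex.conj_ofReal]
    have h1 : (cc a ψ : ℂ) * dd a ψ = a ψ / 2 := by
      rw [dd, show (cc a ψ : ℂ) * (a ψ / (‖a ψ‖ : ℂ) * (cc a ψ : ℂ))
        = ((cc a ψ : ℂ) * (cc a ψ : ℂ)) * (a ψ / (‖a ψ‖ : ℂ)) by ring, hc2]
      field_simp
    have h2 : (starRingEnd ℂ) (dd a ψ) * (cc a ψ : ℂ) = (starRingEnd ℂ) (a ψ) / 2 := by
      rw [hdd, show (starRingEnd ℂ) (a ψ) / (‖a ψ‖ : ℂ) * (cc a ψ : ℂ) * (cc a ψ : ℂ)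
        = ((cc a ψ : ℂ) * (cc a ψ : ℂ)) * ((starRingEnd ℂ) (a ψ) / (‖a ψ‖ : ℂ)) by ring, hc2]
      field_simp
    have h3 : (starRingEnd ℂ) (dd a ψ) * dd a ψ = (‖a ψ‖ : ℂ) / 2 := by
      rw [hdd, dd, show (starRingEnd ℂ) (a ψ) / (‖a ψ‖ : ℂ) * (cc a ψ : ℂ) *
          (a ψ / (‖a ψ‖ : ℂ) * (cc a ψ : ℂ))
        = ((starRingEnd ℂ) (a ψ) * a ψ) * ((cc a ψ : ℂ) * (cc a ψ : ℂ)) /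
          ((‖a ψ‖ : ℂ) * (‖a ψ‖ : ℂ)) by ring, haa, hc2]
      field_simp
    have hWZ : ((((ψ x : ℂˣ) : ℂ))⁻¹) * ((ψ x : ℂˣ) : ℂ) = 1 := inv_mul_cancel₀ hz0
    simp only [gg, if_pos hψ, map_add, map_mul, Complex.conj_ofReal, hzc]
    linear_combination hc2 + ((ψ x : ℂˣ) : ℂ) * h1 + ((((ψ x : ℂˣ) : ℂ))⁻¹) * h2 +
      (((((ψ x : ℂˣ) : ℂ))⁻¹) * ((ψ x : ℂˣ) : ℂ)) * h3 + ((‖a ψ‖ : ℂ) / 2) * hWZ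

end SGAux

/-- A real-valued function on a finite abelian group with dominating constant term admits a
Gram matrix supported on the rows and columns indexed by its Fourier support `S`; in
particular it is a sum of Hermitian squares with Fourier support contained in `S`. -/
theorem dominating_constant_term_sparse_gram
    (G : Type*) [CommGroup G] [Fintype G] [Fintype (G →* ℂˣ)] [DecidableEq (G →* ℂˣ)]
    (S : Finset (G →* ℂˣ)) (hSsymm : ∀ χ ∈ S, χ⁻¹ ∈ S) (hS1 : (1 : G →* ℂˣ) ∈ S)
    (a : (G →* ℂˣ) → ℂ) (f : G → ℝ)
    (hf : ∀ x : G, (f x : ℂ) = ∑ χ ∈ S, a χ * ((χ x : ℂˣ) : ℂ))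
    (ha1 : (a 1).im = 0)
    (hdom : ∑ χ ∈ S.erase 1, ‖a χ‖ ≤ (a 1).re) :
    (∃ Q : Matrix (G →* ℂˣ) (G →* ℂˣ) ℂ, Q.PosSemidef ∧
      (∀ x : G, (f x : ℂ) =
        ∑ χ : G →* ℂˣ, ∑ χ' : G →* ℂˣ,
          Q χ χ' * (((χ x : ℂˣ) : ℂ))⁻¹ * ((χ' x : ℂˣ) : ℂ)) ∧
      (∀ χ χ' : G →* ℂˣ, Q χ χ' ≠ 0 → χ ∈ S ∧ χ' ∈ S)) ∧
    (∃ (m : ℕ) (h : Fin m → G → ℂ),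
      (∀ x : G, f x = ∑ i : Fin m, ‖h i x‖ ^ 2) ∧
      (∀ (i : Fin m) (χ : G →* ℂˣ), χ ∉ S →
        ∑ x : G, h i x * (starRingEnd ℂ) ((χ x : ℂˣ) : ℂ) = 0)) := by
  classical
  -- realness decomposition of f
  have hfx : ∀ x : G, (f x : ℂ) = ((a 1).re : ℂ) +
      ∑ χ ∈ S.erase 1,
        (a χ * ((χ x : ℂˣ) : ℂ) + (starRingEnd ℂ) (a χ) * (((χ x : ℂˣ) : ℂ))⁻¹) / 2 := by
    intro x
    have hconj : (f x : ℂ) = ∑ χ ∈ S, (starRingEnd ℂ) (a χ) * (((χ x : ℂˣ) : ℂ))⁻¹ := by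
      calc (f x : ℂ) = (starRingEnd ℂ) ((f x : ℝ) : ℂ) := (Complex.conj_ofReal _).symm
        _ = ∑ χ ∈ S, (starRingEnd ℂ) (a χ) * (((χ x : ℂˣ) : ℂ))⁻¹ := by
            rw [hf x, map_sum]
            exact Finset.sum_congr rfl fun χ _ => by rw [map_mul, SGAux.char_conj]
    have h1 : (f x : ℂ) + (f x : ℂ) =
        ∑ χ ∈ S, (a χ * ((χ x : ℂˣ) : ℂ) + (starRingEnd ℂ) (a χ) * (((χ x : ℂˣ) : ℂ))⁻¹) := by
      rw [Finset.sum_add_distrib]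
      exact congrArg₂ (· + ·) (hf x) hconj
    have h2 : (f x : ℂ) + (f x : ℂ) = (((a 1).re : ℂ) + ((a 1).re : ℂ)) +
        ∑ χ ∈ S.erase 1,
          (a χ * ((χ x : ℂˣ) : ℂ) + (starRingEnd ℂ) (a χ) * (((χ x : ℂˣ) : ℂ))⁻¹) := by
      rw [h1, ← Finset.sum_erase_add S _ hS1, add_comm]
      congr 1
      simp only [MonoidHom.one_apply, Units.val_one, mul_one, inv_one]
      rw [Complex.add_conj]
      push_cast; ring
    refine mul_left_cancel₀ (two_ne_zero (α := ℂ)) ?_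
    calc (2 : ℂ) * (f x : ℂ) = (f x : ℂ) + (f x : ℂ) := by ring
      _ = (((a 1).re : ℂ) + ((a 1).re : ℂ)) + ∑ χ ∈ S.erase 1,
          (a χ * ((χ x : ℂˣ) : ℂ) + (starRingEnd ℂ) (a χ) * (((χ x : ℂˣ) : ℂ))⁻¹) := h2
      _ = 2 * (((a 1).re : ℂ) + ∑ χ ∈ S.erase 1,
          (a χ * ((χ x : ℂˣ) : ℂ) + (starRingEnd ℂ) (a χ) * (((χ x : ℂˣ) : ℂ))⁻¹) / 2) := by
          rw [mul_add, Finset.mul_sum]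
          congr 1
          · ring
          · exact Finset.sum_congr rfl fun χ _ => by ring
  have hg0 : ∀ ψ : G →* ℂˣ, ψ ∉ S → ∀ x : G, SGAux.gg a S ψ x = 0 := by
    intro ψ hψ x
    rw [SGAux.gg, if_neg (fun h => hψ (Finset.mem_of_mem_erase h)),
      if_neg (fun h => hψ (by rw [h]; exact hS1))]
  -- main identity
  have hmain : ∀ x : G, (f x : ℂ) =
      ∑ ψ : G →* ℂˣ, (starRingEnd ℂ) (SGAux.gg a S ψ x) * SGAux.gg a S ψ x := by
    intro x
    have h1e : SGAux.gg a S 1 x = ((SGAux.ee a S : ℝ) : ℂ) := by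
      rw [SGAux.gg, if_neg (Finset.notMem_erase _ _), if_pos rfl]
    calc (f x : ℂ) = ((a 1).re : ℂ) + ∑ χ ∈ S.erase 1,
          (a χ * ((χ x : ℂˣ) : ℂ) + (starRingEnd ℂ) (a χ) * (((χ x : ℂˣ) : ℂ))⁻¹) / 2 := hfx x
      _ = ((((a 1).re - ∑ χ ∈ S.erase 1, ‖a χ‖ : ℝ)) : ℂ) +
          ∑ χ ∈ S.erase 1, ((‖a χ‖ : ℂ) +
            (a χ * ((χ x : ℂˣ) : ℂ) + (starRingEnd ℂ) (a χ) * (((χ x : ℂˣ) : ℂ))⁻¹) / 2) := by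
          rw [Finset.sum_add_distrib]
          push_cast
          ring
      _ = (starRingEnd ℂ) (SGAux.gg a S 1 x) * SGAux.gg a S 1 x +
          ∑ χ ∈ S.erase 1, (starRingEnd ℂ) (SGAux.gg a S χ x) * SGAux.gg a S χ x := by
          congr 1
          · rw [h1e, Complex.conj_ofReal, ← Complex.ofReal_mul, SGAux.ee,
              Real.mul_self_sqrt (sub_nonneg.mpr hdom)]
          · exact Finset.sum_congr rfl fun χ hχ => (SGAux.conj_gg_mul a S χ hχ x).symm
      _ = ∑ ψ ∈ insert 1 (S.erase 1),
            (starRingEnd ℂ) (SGAux.gg a S ψ x) * SGAux.gg a S ψ x :=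
          by rw [Finset.sum_insert (Finset.notMem_erase 1 S)]
      _ = ∑ ψ ∈ S, (starRingEnd ℂ) (SGAux.gg a S ψ x) * SGAux.gg a S ψ x := by
          rw [Finset.insert_erase hS1]
      _ = ∑ ψ : G →* ℂˣ, (starRingEnd ℂ) (SGAux.gg a S ψ x) * SGAux.gg a S ψ x := by
          refine Finset.sum_subset (Finset.subset_univ S) fun ψ _ hψ => ?_
          rw [hg0 ψ hψ x, mul_zero]
  constructor
  · -- Gram matrix
    refine ⟨(SGAux.BB a S).conjTranspose * (SGAux.BB a S),
      Matrix.posSemidef_conjTranspose_mul_self _, ?_, ?_⟩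
    · intro x
      have hQ : ∀ χ χ' : G →* ℂˣ, ((SGAux.BB a S).conjTranspose * (SGAux.BB a S)) χ χ'
          = ∑ ψ : G →* ℂˣ, (starRingEnd ℂ) (SGAux.BB a S ψ χ) * SGAux.BB a S ψ χ' := by
        intro χ χ'
        simp [Matrix.mul_apply, Matrix.conjTranspose_apply]
      have hconjg : ∀ ψ : G →* ℂˣ, (starRingEnd ℂ) (SGAux.gg a S ψ x)
          = ∑ χ : G →* ℂˣ, (starRingEnd ℂ) (SGAux.BB a S ψ χ) * (((χ x : ℂˣ) : ℂ))⁻¹ := by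
        intro ψ
        rw [← SGAux.sum_BB, map_sum]
        exact Finset.sum_congr rfl fun χ _ => by rw [map_mul, SGAux.char_conj]
      rw [hmain x]
      calc ∑ ψ : G →* ℂˣ, (starRingEnd ℂ) (SGAux.gg a S ψ x) * SGAux.gg a S ψ x
          = ∑ ψ : G →* ℂˣ,
              (∑ χ : G →* ℂˣ, (starRingEnd ℂ) (SGAux.BB a S ψ χ) * (((χ x : ℂˣ) : ℂ))⁻¹) *
              (∑ χ' : G →* ℂˣ, SGAux.BB a S ψ χ' * ((χ' x : ℂˣ) : ℂ)) := by
            exact Finset.sum_congr rfl fun ψ _ => by rw [hconjg, SGAux.sum_BB]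
        _ = ∑ ψ : G →* ℂˣ, ∑ χ : G →* ℂˣ, ∑ χ' : G →* ℂˣ,
              ((starRingEnd ℂ) (SGAux.BB a S ψ χ) * (((χ x : ℂˣ) : ℂ))⁻¹) *
              (SGAux.BB a S ψ χ' * ((χ' x : ℂˣ) : ℂ)) := by
            exact Finset.sum_congr rfl fun ψ _ => Finset.sum_mul_sum _ _ _ _
        _ = ∑ χ : G →* ℂˣ, ∑ χ' : G →* ℂˣ, ∑ ψ : G →* ℂˣ,
              ((starRingEnd ℂ) (SGAux.BB a S ψ χ) * (((χ x : ℂˣ) : ℂ))⁻¹) *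
              (SGAux.BB a S ψ χ' * ((χ' x : ℂˣ) : ℂ)) := by
            rw [Finset.sum_comm]
            exact Finset.sum_congr rfl fun χ _ => Finset.sum_comm
        _ = ∑ χ : G →* ℂˣ, ∑ χ' : G →* ℂˣ,
              ((SGAux.BB a S).conjTranspose * (SGAux.BB a S)) χ χ' *
              (((χ x : ℂˣ) : ℂ))⁻¹ * ((χ' x : ℂˣ) : ℂ) := by
            refine Finset.sum_congr rfl fun χ _ => Finset.sum_congr rfl fun χ' _ => ?_
            rw [hQ, Finset.sum_mul, Finset.sum_mul]
            exact Finset.sum_congr rfl fun ψ _ => by ring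
    · intro χ χ' hne
      have hQ : ((SGAux.BB a S).conjTranspose * (SGAux.BB a S)) χ χ'
          = ∑ ψ : G →* ℂˣ, (starRingEnd ℂ) (SGAux.BB a S ψ χ) * SGAux.BB a S ψ χ' := by
        simp [Matrix.mul_apply, Matrix.conjTranspose_apply]
      constructor
      · by_contra h
        apply hne
        rw [hQ]
        refine Finset.sum_eq_zero fun ψ _ => ?_
        have hB : SGAux.BB a S ψ χ = 0 := by
          by_contra hB
          exact h (SGAux.BB_ne_zero a S hS1 ψ χ hB)
        rw [hB, map_zero, zero_mul]
      · by_contra h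
        apply hne
        rw [hQ]
        refine Finset.sum_eq_zero fun ψ _ => ?_
        have hB : SGAux.BB a S ψ χ' = 0 := by
          by_contra hB
          exact h (SGAux.BB_ne_zero a S hS1 ψ χ' hB)
        rw [hB, mul_zero]
  · -- Hermitian squares
    refine ⟨Fintype.card (G →* ℂˣ), fun i x => SGAux.gg a S ((Fintype.equivFin (G →* ℂˣ)).symm i) x,
      ?_, ?_⟩
    · intro x
      have hsum : ∑ i : Fin (Fintype.card (G →* ℂˣ)),
          (‖SGAux.gg a S ((Fintype.equivFin (G →* ℂˣ)).symm i) x‖) ^ 2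
          = ∑ ψ : G →* ℂˣ, (‖SGAux.gg a S ψ x‖) ^ 2 :=
        Fintype.sum_equiv (Fintype.equivFin (G →* ℂˣ)).symm _ _ (fun i => rfl)
      rw [hsum]
      have : ((f x : ℝ) : ℂ) = ((∑ ψ : G →* ℂˣ, (‖SGAux.gg a S ψ x‖) ^ 2 : ℝ) : ℂ) := by
        rw [hmain x]
        push_cast
        exact Finset.sum_congr rfl fun ψ _ => by
          rw [mul_comm, Complex.mul_conj, Complex.normSq_eq_norm_sq]
          push_cast; ring
      exact_mod_cast this
    · intro i χ hχ
      set ψ : G →* ℂˣ := (Fintype.equivFin (G →* ℂˣ)).symm i with hψdef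
      have hχ1 : χ ≠ 1 := fun h => hχ (by rw [h]; exact hS1)
      by_cases hψ : ψ ∈ S.erase 1
      · have hψS : ψ ∈ S := Finset.mem_of_mem_erase hψ
        have hχψ : ψ ≠ χ := fun h => hχ (by rw [← h]; exact hψS)
        have hterm : ∀ x : G, SGAux.gg a S ψ x * (starRingEnd ℂ) ((χ x : ℂˣ) : ℂ)
            = ((SGAux.cc a ψ : ℝ) : ℂ) * (((χ x : ℂˣ) : ℂ))⁻¹ +
              SGAux.dd a ψ * (((ψ x : ℂˣ) : ℂ) * (((χ x : ℂˣ) : ℂ))⁻¹) := by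
          intro x
          rw [SGAux.gg, if_pos hψ, SGAux.char_conj]
          ring
        rw [Finset.sum_congr rfl (fun x _ => hterm x), Finset.sum_add_distrib,
          ← Finset.mul_sum, ← Finset.mul_sum, SGAux.char_sum_inv_zero χ hχ1,
          SGAux.char_sum_mul_inv_zero ψ χ hχψ, mul_zero, mul_zero, add_zero]
      · by_cases hψ1 : ψ = 1
        · have hterm : ∀ x : G, SGAux.gg a S ψ x * (starRingEnd ℂ) ((χ x : ℂˣ) : ℂ)
              = ((SGAux.ee a S : ℝ) : ℂ) * (((χ x : ℂˣ) : ℂ))⁻¹ := by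
            intro x
            rw [SGAux.gg, if_neg hψ, if_pos hψ1, SGAux.char_conj]
          rw [Finset.sum_congr rfl (fun x _ => hterm x), ← Finset.mul_sum,
            SGAux.char_sum_inv_zero χ hχ1, mul_zero]
        · have hterm : ∀ x : G, SGAux.gg a S ψ x * (starRingEnd ℂ) ((χ x : ℂˣ) : ℂ) = 0 := by
            intro x
            rw [SGAux.gg, if_neg hψ, if_neg hψ1, zero_mul]
          rw [Finset.sum_congr rfl (fun x _ => hterm x), Finset.sum_const, smul_zero]
end

section
/- Let Γ₁ be a chordal graph and K_n the complete graph on n vertices. Then the strong product Γ₁ ⊠ K_n is chordal. -/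
open scoped BigOperators

/-- The strong product of two simple graphs. -/
def strongProd {V₁ V₂ : Type*} (Γ₁ : SimpleGraph V₁) (Γ₂ : SimpleGraph V₂) :
    SimpleGraph (V₁ × V₂) where
  Adj a b := (a.1 = b.1 ∧ Γ₂.Adj a.2 b.2) ∨ (Γ₁.Adj a.1 b.1 ∧ a.2 = b.2) ∨
    (Γ₁.Adj a.1 b.1 ∧ Γ₂.Adj a.2 b.2)
  symm := ⟨by
    rintro a b (⟨h1, h2⟩ | ⟨h1, h2⟩ | ⟨h1, h2⟩)
    · exact Or.inl ⟨h1.symm, h2.symm⟩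
    · exact Or.inr (Or.inl ⟨h1.symm, h2.symm⟩)
    · exact Or.inr (Or.inr ⟨h1.symm, h2.symm⟩)⟩
  loopless := ⟨by
    rintro a (⟨h1, h2⟩ | ⟨h1, h2⟩ | ⟨h1, h2⟩)
    · exact Γ₂.irrefl h2
    · exact Γ₁.irrefl h1
    · exact Γ₁.irrefl h1⟩

/-- A graph is chordal if every cycle of length at least four has a chord, i.e. an edge
joining two non-consecutive vertices of the cycle. -/
def IsChordal {V : Type*} (Γ : SimpleGraph V) : Prop :=
  ∀ ⦃v : V⦄ (w : Γ.Walk v v), w.IsCycle → 4 ≤ w.length →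
    ∃ i j : ℕ, i + 2 ≤ j ∧ j < w.length ∧ ¬(i = 0 ∧ j + 1 = w.length) ∧
      Γ.Adj (w.getVert i) (w.getVert j)

section ChordalAux

open SimpleGraph Walk

variable {V : Type*} {G : SimpleGraph V}

lemma aux_getVert_eq_support_getElem {a b : V} (w : G.Walk a b) :
    ∀ (i : ℕ) (h : i < w.support.length), w.support[i] = w.getVert i := by
  induction w with
  | nil => intro i h; simp at h; subst h; simp
  | cons hadj p ih =>
    intro i h
    cases i with
    | zero => simp
    | succ m =>
      simp only [Walk.support_cons, List.getElem_cons_succ, Walk.getVert_cons_succ]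
      exact ih m (by simpa [Walk.length_support] using h)

/-- For a closed walk whose internal vertices are distinct, two positions carrying
the same vertex must be equal or be the two endpoints. -/
lemma aux_closed_getVert_eq {v : V} (w : G.Walk v v) (hnd : w.support.tail.Nodup)
    {i j : ℕ} (hi : i ≤ w.length) (hj : j ≤ w.length) (h : w.getVert i = w.getVert j) :
    i = j ∨ (i = 0 ∧ j = w.length) ∨ (i = w.length ∧ j = 0) := by
  have hsl : w.support.length = w.length + 1 := Walk.length_support w
  have htl : w.support.tail.length = w.length := by simp [hsl]
  have key : ∀ a b : ℕ, a < w.length → b < w.length →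
      w.getVert (a + 1) = w.getVert (b + 1) → a = b := by
    intro a b ha hb hab
    rw [List.nodup_iff_injective_getElem] at hnd
    have h1 : w.support.tail[a]'(by omega) = w.support.tail[b]'(by omega) := by
      rw [List.getElem_tail, List.getElem_tail,
        aux_getVert_eq_support_getElem, aux_getVert_eq_support_getElem]
      exact hab
    exact congrArg Fin.val (@hnd ⟨a, by omega⟩ ⟨b, by omega⟩ h1)
  have h0L : w.getVert 0 = w.getVert w.length := by
    rw [Walk.getVert_zero, Walk.getVert_length]
  rcases Nat.eq_zero_or_pos i with hi0 | hip
  · rcases Nat.eq_zero_or_pos j with hj0 | hjp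
    · left; omega
    · subst hi0
      rcases Nat.eq_zero_or_pos w.length with hL | hL
      · left; omega
      · obtain ⟨j', rfl⟩ : ∃ j', j = j' + 1 := ⟨j - 1, by omega⟩
        obtain ⟨L', hL'⟩ : ∃ L', w.length = L' + 1 := ⟨w.length - 1, by omega⟩
        have : L' = j' := key L' j' (by omega) (by omega)
          (by rw [← hL', ← h0L]; exact h)
        right; left; omega
  · rcases Nat.eq_zero_or_pos j with hj0 | hjp
    · subst hj0
      rcases Nat.eq_zero_or_pos w.length with hL | hL
      · left; omega
      · obtain ⟨i', rfl⟩ : ∃ i', i = i' + 1 := ⟨i - 1, by omega⟩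
        obtain ⟨L', hL'⟩ : ∃ L', w.length = L' + 1 := ⟨w.length - 1, by omega⟩
        have : i' = L' := key i' L' (by omega) (by omega)
          (by rw [← hL', ← h0L]; exact h)
        right; right; omega
    · obtain ⟨i', rfl⟩ : ∃ i', i = i' + 1 := ⟨i - 1, by omega⟩
      obtain ⟨j', rfl⟩ : ∃ j', j = j' + 1 := ⟨j - 1, by omega⟩
      left
      have := key i' j' (by omega) (by omega) h
      omega

lemma aux_edges_getElem {a b : V} (w : G.Walk a b) :
    ∀ (i : ℕ) (h : i < w.edges.length),
      w.edges[i] = s(w.getVert i, w.getVert (i + 1)) := by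
  induction w with
  | nil => intro i h; simp at h
  | cons hadj p ih =>
    intro i h
    cases i with
    | zero => simp [Walk.getVert_cons_succ]
    | succ m =>
      simp only [Walk.edges_cons, List.getElem_cons_succ, Walk.getVert_cons_succ]
      exact ih m (by simpa using h)

/-- A closed walk of length at least 3 with distinct internal vertices is a cycle. -/
lemma aux_isCycle_of_nodup_tail {v : V} (w : G.Walk v v) (h3 : 3 ≤ w.length)
    (hnd : w.support.tail.Nodup) : w.IsCycle := by
  rw [Walk.isCycle_def]
  refine ⟨⟨?_⟩, ?_, hnd⟩
  · rw [List.nodup_iff_injective_getElem]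
    rintro ⟨i, hi⟩ ⟨j, hj⟩ hij
    have hel : w.edges.length = w.length := Walk.length_edges w
    simp only at hij
    rw [aux_edges_getElem, aux_edges_getElem, Sym2.eq_iff] at hij
    have hiL : i < w.length := by omega
    have hjL : j < w.length := by omega
    apply Fin.ext
    simp only
    rcases hij with ⟨h1, h2⟩ | ⟨h1, h2⟩
    · rcases aux_closed_getVert_eq w hnd (by omega) (by omega) h1 with h | h | h <;> omega
    · rcases aux_closed_getVert_eq w hnd (by omega) (by omega) h2 with h | h | h
      · subst h
        rcases aux_closed_getVert_eq w hnd (by omega) (by omega) h1 with h | h | h <;> omega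
      · omega
      · rcases aux_closed_getVert_eq w hnd (by omega) (by omega) h1 with h' | h' | h' <;> omega
  · intro hnil
    rw [hnil] at h3
    simp at h3

end ChordalAux

section ProjWalk

variable {V₁ : Type*} {n : ℕ} {Γ₁ : SimpleGraph V₁}

/-- Projection of a walk in the strong product with a complete graph onto the first
factor, assuming every step moves in the first coordinate. -/
def projWalk :
    ∀ {a b : V₁ × Fin n} (w : (strongProd Γ₁ (⊤ : SimpleGraph (Fin n))).Walk a b),
      (∀ i, i < w.length → Γ₁.Adj (w.getVert i).1 (w.getVert (i + 1)).1) →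
      Γ₁.Walk a.1 b.1
  | _, _, .nil, _ => .nil
  | _, _, .cons h p, H =>
      .cons (by simpa using H 0 (by simp))
        (projWalk p (fun i hi => by
          have := H (i + 1) (by simp only [SimpleGraph.Walk.length_cons]; omega)
          simpa [SimpleGraph.Walk.getVert_cons_succ] using this))

lemma projWalk_length :
    ∀ {a b : V₁ × Fin n} (w : (strongProd Γ₁ (⊤ : SimpleGraph (Fin n))).Walk a b)
      (H : ∀ i, i < w.length → Γ₁.Adj (w.getVert i).1 (w.getVert (i + 1)).1),
      (projWalk w H).length = w.length
  | _, _, .nil, _ => rfl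
  | _, _, .cons h p, H => by
      simp only [projWalk, SimpleGraph.Walk.length_cons]
      exact congrArg (· + 1) (projWalk_length p _)

lemma projWalk_getVert :
    ∀ {a b : V₁ × Fin n} (w : (strongProd Γ₁ (⊤ : SimpleGraph (Fin n))).Walk a b)
      (H : ∀ i, i < w.length → Γ₁.Adj (w.getVert i).1 (w.getVert (i + 1)).1) (i : ℕ),
      (projWalk w H).getVert i = (w.getVert i).1
  | _, _, .nil, _, i => rfl
  | _, _, .cons h p, H, 0 => by simp [projWalk]
  | _, _, .cons h p, H, (i + 1) => by
      simp only [projWalk, SimpleGraph.Walk.getVert_cons_succ]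
      exact projWalk_getVert p _ i

lemma projWalk_support :
    ∀ {a b : V₁ × Fin n} (w : (strongProd Γ₁ (⊤ : SimpleGraph (Fin n))).Walk a b)
      (H : ∀ i, i < w.length → Γ₁.Adj (w.getVert i).1 (w.getVert (i + 1)).1),
      (projWalk w H).support = w.support.map Prod.fst
  | _, _, .nil, _ => rfl
  | _, _, .cons h p, H => by
      simp only [projWalk, SimpleGraph.Walk.support_cons, List.map_cons]
      exact congrArg (_ :: ·) (projWalk_support p _)

/-- Lifting equality of first coordinates (with distinct vertices) to adjacency. -/
lemma liftEqFst {a b : V₁ × Fin n} (h : a.1 = b.1) (hne : a ≠ b) :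
    (strongProd Γ₁ (⊤ : SimpleGraph (Fin n))).Adj a b :=
  Or.inl ⟨h, by
    simp only [SimpleGraph.top_adj]
    exact fun h2 => hne (Prod.ext h h2)⟩

/-- Lifting adjacency of first coordinates to the strong product with a complete graph. -/
lemma liftAdj {a b : V₁ × Fin n} (h : Γ₁.Adj a.1 b.1) :
    (strongProd Γ₁ (⊤ : SimpleGraph (Fin n))).Adj a b := by
  by_cases h2 : a.2 = b.2
  · exact Or.inr (Or.inl ⟨h, h2⟩)
  · exact Or.inr (Or.inr ⟨h, by simpa using h2⟩)

end ProjWalk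

/-- The strong product of a chordal graph with a complete graph is chordal. -/
theorem strongProd_complete_isChordal
    {V₁ : Type*} (Γ₁ : SimpleGraph V₁) (hΓ₁ : IsChordal Γ₁) (n : ℕ) :
    IsChordal (strongProd Γ₁ (⊤ : SimpleGraph (Fin n))) := by
  intro v w hw hlen
  have hnd := hw.support_nodup
  have hL0 : w.getVert w.length = w.getVert 0 := by
    rw [SimpleGraph.Walk.getVert_length, SimpleGraph.Walk.getVert_zero]
  have hstep : ∀ k, k < w.length →
      (w.getVert k).1 = (w.getVert (k + 1)).1 ∨
      Γ₁.Adj (w.getVert k).1 (w.getVert (k + 1)).1 := by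
    intro k hk
    rcases w.adj_getVert_succ hk with ⟨h, _⟩ | ⟨h, _⟩ | ⟨h, _⟩
    · exact Or.inl h
    · exact Or.inr h
    · exact Or.inr h
  by_cases h1 : ∃ i j : ℕ, i + 2 ≤ j ∧ j < w.length ∧ ¬(i = 0 ∧ j + 1 = w.length) ∧
      (w.getVert i).1 = (w.getVert j).1
  · obtain ⟨i, j, hij, hjL, hnc, hfst⟩ := h1
    have hne' : w.getVert i ≠ w.getVert j := by
      intro heq
      rcases aux_closed_getVert_eq w hnd (by omega) (by omega) heq with h | h | h <;> omega
    exact ⟨i, j, hij, hjL, hnc, liftEqFst hfst hne'⟩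
  push_neg at h1
  by_cases h2 : ∃ i, i < w.length ∧ (w.getVert i).1 = (w.getVert (i + 1)).1
  · obtain ⟨i, hiL, hst⟩ := h2
    rcases Nat.eq_zero_or_pos i with rfl | hip
    · -- stay at step 0; chord between positions 1 and L-1
      have hLne : (w.getVert (w.length - 1)).1 ≠ (w.getVert w.length).1 := by
        intro he
        exact h1 1 (w.length - 1) (by omega) (by omega) (by omega)
          (by rw [← hst, ← hL0, ← he])
      have hadj : Γ₁.Adj (w.getVert (w.length - 1)).1 (w.getVert w.length).1 := by
        have h := hstep (w.length - 1) (by omega)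
        have e : w.length - 1 + 1 = w.length := by omega
        rw [e] at h
        exact h.resolve_left hLne
      refine ⟨1, w.length - 1, by omega, by omega, by omega, liftAdj ?_⟩
      have : (w.getVert w.length).1 = (w.getVert 1).1 := by rw [hL0, hst]
      rw [← this]
      exact hadj.symm
    · rcases Nat.eq_or_lt_of_le (show i + 1 ≤ w.length by omega) with hiT | hiT
      · -- stay at last step; chord between positions 1 and L-1
        have e : i = w.length - 1 := by omega
        subst e
        have h0ne : (w.getVert 0).1 ≠ (w.getVert 1).1 := by
          intro he
          refine h1 1 (w.length - 1) (by omega) (by omega) (by omega) ?_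
          rw [← he]
          rw [hiT] at hst
          rw [hst, hL0]
        have hadj : Γ₁.Adj (w.getVert 0).1 (w.getVert 1).1 := by
          have h := hstep 0 (by omega)
          simpa using h.resolve_left h0ne
        refine ⟨1, w.length - 1, by omega, by omega, by omega, liftAdj ?_⟩
        have : (w.getVert (w.length - 1)).1 = (w.getVert 0).1 := by
          rw [hiT] at hst
          rw [hst, hL0]
        rw [this]
        exact hadj.symm
      · -- internal stay; chord between positions i-1 and i+1
        have hprev : (w.getVert (i - 1)).1 ≠ (w.getVert i).1 := by
          intro he
          exact h1 (i - 1) (i + 1) (by omega) (by omega) (by omega) (by rw [he, hst])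
        have hadj : Γ₁.Adj (w.getVert (i - 1)).1 (w.getVert i).1 := by
          have h := hstep (i - 1) (by omega)
          have e : i - 1 + 1 = i := by omega
          rw [e] at h
          exact h.resolve_left hprev
        refine ⟨i - 1, i + 1, by omega, by omega, by omega, liftAdj ?_⟩
        rw [← hst]
        exact hadj
  · -- no stays: project to Γ₁ and use chordality there
    push_neg at h2
    have Hadj : ∀ k, k < w.length → Γ₁.Adj (w.getVert k).1 (w.getVert (k + 1)).1 :=
      fun k hk => (hstep k hk).resolve_left (h2 k hk)
    have key2 : ∀ a b : ℕ, a < b → b < w.length →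
        (w.getVert (a + 1)).1 = (w.getVert (b + 1)).1 → False := by
      intro a b hab hbL heq
      rcases Nat.eq_or_lt_of_le (show a + 1 ≤ b by omega) with hb1 | hb1
      · subst hb1
        exact h2 (a + 1) (by omega) heq
      · rcases Nat.eq_or_lt_of_le (show b + 1 ≤ w.length by omega) with hbT | hbT
        · have heq0 : (w.getVert 0).1 = (w.getVert (a + 1)).1 := by
            rw [heq, hbT, hL0]
          rcases Nat.eq_zero_or_pos a with rfl | hap
          · exact h2 0 (by omega) heq0
          · exact h1 0 (a + 1) (by omega) (by omega) (by omega) heq0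
        · exact h1 (a + 1) (b + 1) (by omega) (by omega) (by omega) heq
    set pw := projWalk w Hadj with hpw
    have hpl : pw.length = w.length := projWalk_length w Hadj
    have hsl : pw.support.length = w.length + 1 := by
      rw [SimpleGraph.Walk.length_support, hpl]
    have hpnd : pw.support.tail.Nodup := by
      rw [List.nodup_iff_injective_getElem]
      rintro ⟨a, ha⟩ ⟨b, hb⟩ hab
      have htl : pw.support.tail.length = w.length := by simp [hsl]
      simp only at hab
      rw [List.getElem_tail, List.getElem_tail,
        aux_getVert_eq_support_getElem, aux_getVert_eq_support_getElem,
        projWalk_getVert, projWalk_getVert] at hab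
      apply Fin.ext
      simp only
      rcases lt_trichotomy a b with h | h | h
      · exact absurd hab (fun he => key2 a b h (by omega) he)
      · exact h
      · exact absurd hab.symm (fun he => key2 b a h (by omega) he)
    have hcyc : pw.IsCycle := aux_isCycle_of_nodup_tail pw (by omega) hpnd
    obtain ⟨i, j, hij, hjL, hnc, hadj⟩ := hΓ₁ pw hcyc (by omega)
    rw [hpl] at hjL hnc
    rw [projWalk_getVert, projWalk_getVert] at hadj
    exact ⟨i, j, hij, hjL, hnc, liftAdj hadj⟩
end

section
/- Every finite chordal graph has at least one simplicial vertex, and every non-complete finite chordal graph has at least two non-adjacent simplicial vertices. -/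
/-!
Dirac's argument. Let `a, b` be non-adjacent vertices of a finite set `s`, let `B` be the
component of `b` in `s` minus the closed neighbourhood of `a`, and let `S` be the set of
neighbours of `a` adjacent to `B`. Two vertices `x, y ∈ S` are joined by a path through `a` and
by one through `B`; a shortest path through `B` is chordless, so chordality of the resulting
cycle forces `x ~ y`, i.e. `S` is a clique. The set `B ∪ S` misses `a`, so by induction it is a
clique or has two non-adjacent simplicial vertices; either way some vertex of `B` is simplicial
in `B ∪ S`, hence in `s`, because the neighbours of `B` in `s` lie in `B ∪ S`. Such a vertex is
not adjacent to `a`; starting again from it gives a second one, not adjacent to the first.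
-/

open scoped BigOperators

/-- A vertex is simplicial if its neighborhood induces a complete subgraph. -/
def IsSimplicial {V : Type*} (Γ : SimpleGraph V) (v : V) : Prop :=
  ∀ u w : V, Γ.Adj v u → Γ.Adj v w → u ≠ w → Γ.Adj u w

namespace SimpleGraph

variable {V : Type*} {G : SimpleGraph V} {s : Set V}

namespace Walk

variable {u v : V}

theorem exists_length_lt_of_not_isChordless {p : G.Walk u v} (hp : ¬p.IsChordless) :
    ∃ q : G.Walk u v, q.length < p.length ∧ q.support ⊆ p.support := by
  obtain ⟨x, y, hx, hy, hxy, hxy_edge⟩ :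
      ∃ x y, x ∈ p.support ∧ y ∈ p.support ∧ G.Adj x y ∧ s(x, y) ∉ p.edges := by
    simpa [isChordless_iff_forall_mem_edges] using hp
  obtain ⟨i, rfl, hi⟩ := mem_support_iff_exists_getVert.mp hx
  obtain ⟨j, rfl, hj⟩ := mem_support_iff_exists_getVert.mp hy
  clear hx hy
  wlog hij : i < j generalizing i j
  · have hji : j < i := lt_of_le_of_ne (not_lt.mp hij) fun h => hxy.ne (h ▸ rfl)
    exact this j hj i hi hxy.symm (by rwa [Sym2.eq_swap]) hji
  have hij2 : i + 2 ≤ j := by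
    by_contra h
    obtain rfl : j = i + 1 := by omega
    exact hxy_edge ((mk_mem_edges_iff_exists p).mpr ⟨i, by omega, rfl⟩)
  refine ⟨(p.take i).append (cons hxy (p.drop j)), ?_, ?_⟩
  · simp only [length_append, take_length, length_cons, drop_length]
    omega
  · intro z hz
    rw [mem_support_append_iff, support_take, support_cons, List.mem_cons,
      drop_support_eq_support_drop_min] at hz
    rcases hz with hz | rfl | hz
    · exact List.mem_of_mem_take hz
    · exact p.getVert_mem_support i
    · exact List.mem_of_mem_drop hz

theorem IsChordless.cons_concat {a x y : V} {q : G.Walk x y} (hq : q.IsChordless)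
    (hax : G.Adj a x) (hya : G.Adj y a) (hnbr : ∀ v ∈ q.support, G.Adj a v → v = x ∨ v = y) :
    (cons hax (q.concat hya)).IsChordless := by
  rw [isChordless_iff_forall_mem_edges]
  intro u w hu hw huw
  have hsupp : ∀ {v}, v ∈ (cons hax (q.concat hya)).support → v = a ∨ v ∈ q.support := by
    intro v hv
    simp only [support_cons, support_concat, List.mem_cons, List.mem_append,
      List.not_mem_nil, or_false] at hv
    tauto
  have hcone : ∀ v ∈ q.support, G.Adj a v → s(a, v) ∈ (cons hax (q.concat hya)).edges := by
    intro v hv hav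
    rcases hnbr v hv hav with rfl | rfl <;> simp [edges_concat, Sym2.eq_swap]
  rcases hsupp hu with rfl | hu' <;> rcases hsupp hw with rfl | hw'
  · exact (huw.ne rfl).elim
  · exact hcone w hw' huw
  · exact Sym2.eq_swap ▸ hcone u hu' huw.symm
  · simp [edges_concat, hq.mem_edges hu' hw' huw]

theorem IsPath.cons_concat_isCycle {a x y : V} {q : G.Walk x y} (hq : q.IsPath)
    (ha : a ∉ q.support) (hxy : x ≠ y) (hax : G.Adj a x) (hya : G.Adj y a) :
    (cons hax (q.concat hya)).IsCycle := by
  refine (cons_isCycle_iff _ _).mpr ⟨hq.concat ha hya, fun h => ?_⟩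
  rw [edges_concat, List.concat_eq_append, List.mem_append, List.mem_singleton] at h
  rcases h with h | h
  · exact ha (q.fst_mem_support_of_mem_edges h)
  · rcases Sym2.eq_iff.mp h with ⟨-, h⟩ | ⟨-, h⟩
    · exact hax.ne h.symm
    · exact hxy h

end Walk

def HasSimplicialNonNeighbors (G : SimpleGraph V) (s : Set V) : Prop :=
  ∀ a ∈ s, ∀ b ∈ s, a ≠ b → ¬G.Adj a b →
    ∃ v ∈ s, v ≠ a ∧ ¬G.Adj a v ∧ G.IsClique (G.neighborSet v ∩ s)

namespace HasSimplicialNonNeighbors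

theorem exists_two (h : G.HasSimplicialNonNeighbors s) {x y : V} (hx : x ∈ s) (hy : y ∈ s)
    (hxy : x ≠ y) (hnxy : ¬G.Adj x y) :
    ∃ v ∈ s, ∃ w ∈ s, v ≠ w ∧ ¬G.Adj v w ∧
      G.IsClique (G.neighborSet v ∩ s) ∧ G.IsClique (G.neighborSet w ∩ s) := by
  obtain ⟨v, hv, hvx, hxv, hv_simp⟩ := h x hx y hy hxy hnxy
  obtain ⟨w, hw, hwv, hvw, hw_simp⟩ := h v hv x hx hvx fun h => hxv h.symm
  exact ⟨v, hv, w, hw, hwv.symm, hvw, hv_simp, hw_simp⟩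

theorem exists_notMem_clique (h : G.HasSimplicialNonNeighbors s) {K : Set V}
    (hK : G.IsClique K) {b : V} (hb : b ∈ s) (hbK : b ∉ K) :
    ∃ v ∈ s, v ∉ K ∧ G.IsClique (G.neighborSet v ∩ s) := by
  by_cases hs : G.IsClique s
  · exact ⟨b, hb, hbK, hs.subset Set.inter_subset_right⟩
  obtain ⟨x, hx, y, hy, hxy, hnxy⟩ : ∃ x ∈ s, ∃ y ∈ s, x ≠ y ∧ ¬G.Adj x y := by
    simpa [IsClique, Set.Pairwise] using hs
  obtain ⟨v, hv, w, hw, hvw, hnvw, hv_simp, hw_simp⟩ := h.exists_two hx hy hxy hnxy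
  by_cases hvK : v ∈ K
  · exact ⟨w, hw, fun hwK => hnvw (hK hvK hwK hvw), hw_simp⟩
  · exact ⟨v, hv, hvK, hv_simp⟩

theorem exists_mem_of_clique_separator {B S : Set V}
    (h : G.HasSimplicialNonNeighbors (B ∪ S)) (hS : G.IsClique S) {b : V} (hbB : b ∈ B)
    (hbS : b ∉ S) (hclosed : ∀ v ∈ B, G.neighborSet v ∩ s ⊆ B ∪ S) :
    ∃ v ∈ B, G.IsClique (G.neighborSet v ∩ s) := by
  obtain ⟨v, hv, hvS, hv_simp⟩ := h.exists_notMem_clique hS (Or.inl hbB) hbS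
  have hvB : v ∈ B := hv.resolve_right hvS
  exact ⟨v, hvB, hv_simp.subset (Set.subset_inter Set.inter_subset_left (hclosed v hvB))⟩

end HasSimplicialNonNeighbors

end SimpleGraph

open SimpleGraph Walk

namespace IsChordal

variable {V : Type*} {G : SimpleGraph V}

theorem not_isChordless (hG : IsChordal G) {v : V} {c : G.Walk v v} (hc : c.IsCycle)
    (hlen : 4 ≤ c.length) : ¬c.IsChordless := by
  intro hchordless
  obtain ⟨i, j, hij, hj, hnot_last, hadj⟩ := hG c hc hlen
  obtain ⟨k, hk, hedge⟩ := c.mk_mem_edges_iff_exists.mp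
    (hchordless.mem_edges (c.getVert_mem_support i) (c.getVert_mem_support j) hadj)
  rcases Sym2.eq_iff.mp hedge with ⟨hki, hkj⟩ | ⟨hkj, hki⟩
  · have : k = i := hc.getVert_injOn' (by simp; omega) (by simp; omega) hki
    have : k + 1 = j := hc.getVert_injOn (by simp; omega) (by simp; omega) hkj
    omega
  · obtain rfl : k = j := hc.getVert_injOn' (by simp; omega) (by simp; omega) hkj
    rcases Nat.eq_zero_or_pos i with rfl | hi
    · rw [getVert_zero, hc.getVert_endpoint_iff (by omega)] at hki
      omega
    · have : k + 1 = i := hc.getVert_injOn (by simp; omega) (by simp; omega) hki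
      omega

theorem adj_of_walk (hG : IsChordal G) {a x y : V} (hax : G.Adj a x) (hay : G.Adj a y)
    (hxy : x ≠ y) (p : G.Walk x y)
    (hp : ∀ v ∈ p.support, v = x ∨ v = y ∨ (v ≠ a ∧ ¬G.Adj a v)) : G.Adj x y := by
  classical
  by_contra hnxy
  induction hn : p.length using Nat.strong_induction_on generalizing p with
  | _ n ih =>
  have no_shorter : ∀ q : G.Walk x y, q.support ⊆ p.support → n ≤ q.length := by
    intro q hsub
    by_contra! hq
    exact ih _ hq q (fun v hv => hp v (hsub hv)) rfl
  set q := p.bypass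
  have hqp : q.support ⊆ p.support := p.support_bypass_subset_support
  have hchordless : q.IsChordless := by
    by_contra h
    obtain ⟨r, hr, hsub⟩ := exists_length_lt_of_not_isChordless h
    have := no_shorter r fun v hv => hqp (hsub hv)
    have : q.length ≤ p.length := p.length_bypass_le_length
    omega
  have hlen : 2 ≤ q.length := by
    have h0 : q.length ≠ 0 := fun h => hxy (eq_of_length_eq_zero h)
    have h1 : q.length ≠ 1 := fun h => hnxy (adj_of_length_eq_one h)
    omega
  have haq : a ∉ q.support := fun h => by
    rcases hp a (hqp h) with h | h | h
    · exact hax.ne h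
    · exact hay.ne h
    · exact h.1 rfl
  have hcycle := p.bypass_isPath.cons_concat_isCycle haq hxy hax hay.symm
  refine hG.not_isChordless hcycle (by simp; omega) (hchordless.cons_concat hax hay.symm ?_)
  intro v hv hav
  rcases hp v (hqp hv) with h | h | h
  · exact Or.inl h
  · exact Or.inr h
  · exact absurd hav h.2

theorem hasSimplicialNonNeighbors_of_ssubset (hG : IsChordal G) {s : Set V}
    (ih : ∀ t ⊂ s, G.HasSimplicialNonNeighbors t) : G.HasSimplicialNonNeighbors s := by
  intro a ha b hb hab hnab
  set t := {z | z ∈ s ∧ z ≠ a ∧ ¬G.Adj a z}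
  set B := {w | ∃ p : G.Walk b w, ∀ z ∈ p.support, z ∈ t}
  set S := {x | x ∈ s ∧ G.Adj a x ∧ ∃ u ∈ B, G.Adj u x}
  have hBt : B ⊆ t := fun w ⟨p, hp⟩ => hp w p.end_mem_support
  have hbB : b ∈ B := ⟨nil, by simp [t, hb, hab.symm, hnab]⟩
  have hclosed : ∀ v ∈ B, G.neighborSet v ∩ s ⊆ B ∪ S := by
    rintro v ⟨p, hp⟩ w ⟨hvw : G.Adj v w, hw⟩
    by_cases hwt : w ∈ t
    · refine Or.inl ⟨p.concat hvw, fun z hz => ?_⟩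
      rw [support_concat, List.mem_append, List.mem_singleton] at hz
      rcases hz with hz | rfl
      · exact hp z hz
      · exact hwt
    · have hvt := hp v p.end_mem_support
      refine Or.inr ⟨hw, ?_, v, ⟨p, hp⟩, hvw⟩
      by_contra haw
      obtain rfl : w = a := by simpa [t, hw, haw] using hwt
      exact hvt.2.2 hvw.symm
  have hS : G.IsClique S := by
    rintro x ⟨-, hax, u, ⟨pu, hpu⟩, hux⟩ y ⟨-, hay, w, ⟨pw, hpw⟩, hwy⟩ hxy
    refine hG.adj_of_walk hax hay hxy (cons hux.symm ((pu.reverse.append pw).concat hwy)) ?_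
    intro z hz
    simp only [support_cons, support_concat, support_append, support_reverse, List.mem_cons,
      List.mem_append, List.mem_reverse, List.not_mem_nil, or_false] at hz
    rcases hz with hz | (hz | hz) | hz
    · exact Or.inl hz
    · exact Or.inr (Or.inr (hpu z hz).2)
    · exact Or.inr (Or.inr (hpw z (List.mem_of_mem_tail hz)).2)
    · exact Or.inr (Or.inl hz)
  have hBS : B ∪ S ⊂ s := by
    refine (Set.ssubset_iff_of_subset (Set.union_subset (fun w hw => (hBt hw).1)
      fun w hw => hw.1)).mpr ⟨a, ha, ?_⟩
    rintro (haB | haS)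
    · exact (hBt haB).2.1 rfl
    · exact haS.2.1.ne rfl
  obtain ⟨v, hvB, hv_simp⟩ := (ih _ hBS).exists_mem_of_clique_separator hS hbB
    (fun h => (hBt hbB).2.2 h.2.1) hclosed
  exact ⟨v, (hBt hvB).1, (hBt hvB).2.1, (hBt hvB).2.2, hv_simp⟩

theorem hasSimplicialNonNeighbors [Finite V] (hG : IsChordal G) (s : Set V) :
    G.HasSimplicialNonNeighbors s :=
  WellFoundedLT.induction s fun _ ih => hG.hasSimplicialNonNeighbors_of_ssubset ih

end IsChordal

/-- Every finite chordal graph has a simplicial vertex, and every non-complete finite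
chordal graph has two non-adjacent simplicial vertices. -/
theorem chordal_has_simplicial_vertex
    {V : Type*} [Fintype V] [Nonempty V]
    (Γ : SimpleGraph V) (hΓ : IsChordal Γ) :
    (∃ v : V, IsSimplicial Γ v) ∧
      (Γ ≠ ⊤ → ∃ v w : V, v ≠ w ∧ ¬Γ.Adj v w ∧ IsSimplicial Γ v ∧ IsSimplicial Γ w) := by
  have hsimplicial : ∀ v, Γ.IsClique (Γ.neighborSet v ∩ Set.univ) → IsSimplicial Γ v :=
    fun v hv u w hu hw huw => hv ⟨hu, trivial⟩ ⟨hw, trivial⟩ huw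
  have hΓ' := hΓ.hasSimplicialNonNeighbors Set.univ
  refine ⟨?_, fun hne => ?_⟩
  · obtain ⟨b⟩ := ‹Nonempty V›
    obtain ⟨v, -, -, hv⟩ := hΓ'.exists_notMem_clique Γ.isClique_empty (Set.mem_univ b)
      (Set.notMem_empty b)
    exact ⟨v, hsimplicial v hv⟩
  · obtain ⟨x, y, hxy, hnxy⟩ : ∃ x y, x ≠ y ∧ ¬Γ.Adj x y := by
      contrapose! hne
      ext x y
      exact ⟨fun h => h.ne, hne x y⟩
    obtain ⟨v, -, w, -, hvw, hnvw, hv, hw⟩ :=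
      hΓ'.exists_two (Set.mem_univ x) (Set.mem_univ y) hxy hnxy
    exact ⟨v, w, hvw, hnvw, hsimplicial v hv, hsimplicial w hw⟩
end

section
/- A finite graph is chordal if and only if it has a perfect elimination ordering, i.e., an ordering v₁ ≺ ⋯ ≺ v_n of the vertices such that for all i < j < k, if v_i is adjacent to both v_j and v_k then v_j is adjacent to v_k. -/
open scoped BigOperators

/-!
If `σ` is a perfect elimination ordering, the vertex of a cycle that comes first in `σ` has
adjacent cycle-neighbours, and on a cycle of length at least four this edge is a chord.

Conversely, it suffices to find a simplicial vertex (one whose neighbourhood is a clique) in every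
nonempty finite chordal graph: put it first and order the rest by induction. This is Dirac's lemma
in the form: if `a` has a non-neighbour `b`, some simplicial vertex lies outside `N[a]`. Let `C` be
the component of `b` in `G - N[a]` and `S` its boundary. Then `S ⊆ N(a)`, and two nonadjacent
vertices of `S` would be joined by a chordless path through `C`, which closes up through `a` to a
chordless cycle of length at least four; so `S` is a clique. Applying the lemma twice in the
smaller graph `G[C ∪ S]` gives two nonadjacent simplicial vertices there; one of them lies in `C`,
and it is simplicial in `G` because all its neighbours lie in `C ∪ S`.
-/

namespace SimpleGraph.Walk

variable {V : Type*} {G : SimpleGraph V}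

lemma exists_shorter_of_adj_getVert {x y : V} (p : G.Walk x y) {i j : ℕ} (hij : i + 2 ≤ j)
    (hj : j ≤ p.length) (h : G.Adj (p.getVert i) (p.getVert j)) :
    ∃ q : G.Walk x y, q.length < p.length ∧ q.support ⊆ p.support := by
  refine ⟨(p.take i).append ((p.drop j).cons h), by simp; omega, fun z hz => ?_⟩
  simp only [mem_support_append_iff, support_cons, List.mem_cons, support_take,
    drop_support_eq_support_drop_min] at hz
  rcases hz with hz | rfl | hz
  · exact List.take_subset _ _ hz
  · exact p.getVert_mem_support i
  · exact List.drop_subset _ _ hz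

lemma exists_isPath_not_adj_getVert {x y : V} (p : G.Walk x y) :
    ∃ q : G.Walk x y, q.IsPath ∧ q.support ⊆ p.support ∧
      ∀ i j, i + 2 ≤ j → j ≤ q.length → ¬G.Adj (q.getVert i) (q.getVert j) := by
  classical
  induction hn : p.length using Nat.strong_induction_on generalizing p with
  | _ n ih =>
  by_cases hb : p.bypass.length < p.length
  · obtain ⟨q, hq, hsub, hchordless⟩ := ih _ (hn ▸ hb) p.bypass rfl
    exact ⟨q, hq, List.Subset.trans hsub p.support_bypass_subset_support, hchordless⟩
  have hpath : p.IsPath :=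
    p.bypass_eq_self_of_length_le_length_bypass (not_lt.mp hb) ▸ p.bypass_isPath
  by_cases hchord : ∃ i j, i + 2 ≤ j ∧ j ≤ p.length ∧ G.Adj (p.getVert i) (p.getVert j)
  · obtain ⟨i, j, hij, hj, hadj⟩ := hchord
    obtain ⟨r, hr, hrp⟩ := p.exists_shorter_of_adj_getVert hij hj hadj
    obtain ⟨q, hq, hsub, hchordless⟩ := ih _ (hn ▸ hr) r rfl
    exact ⟨q, hq, List.Subset.trans hsub hrp, hchordless⟩
  · exact ⟨p, hpath, List.Subset.refl _, fun i j hij hj hadj => hchord ⟨i, j, hij, hj, hadj⟩⟩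

end SimpleGraph.Walk

namespace IsChordal

open SimpleGraph

variable {V : Type*} {G : SimpleGraph V}

lemma of_embedding {W : Type*} {H : SimpleGraph W} (f : G ↪g H) (hH : IsChordal H) :
    IsChordal G := by
  intro v w hw hlen
  obtain ⟨i, j, hij, hj, hne, hadj⟩ := hH (w.map f.toHom) (hw.map f.injective)
    (by rwa [Walk.length_map])
  rw [Walk.length_map] at hj hne
  rw [Walk.getVert_map, Walk.getVert_map] at hadj
  exact ⟨i, j, hij, hj, hne, f.map_adj_iff.mp hadj⟩

lemma adj_of_common_neighbor_of_walk (hG : IsChordal G) {a x y : V} (hax : G.Adj a x)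
    (hay : G.Adj a y) (hxy : x ≠ y) (p : G.Walk x y)
    (hp : ∀ z ∈ p.support, z = x ∨ z = y ∨ z ≠ a ∧ ¬G.Adj a z) : G.Adj x y := by
  by_contra hnxy
  obtain ⟨q, hq, hqp, hchordless⟩ := p.exists_isPath_not_adj_getVert
  have hlen : 2 ≤ q.length := by
    by_contra! h
    interval_cases hl : q.length
    · exact hxy (q.eq_of_length_eq_zero hl)
    · exact hnxy (q.adj_of_length_eq_one hl)
  have hinner : ∀ k, 0 < k → k < q.length → ¬G.Adj a (q.getVert k) := by
    intro k hk0 hk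
    rcases hp _ (hqp (q.getVert_mem_support k)) with h | h | h
    · exact absurd ((hq.getVert_eq_start_iff hk.le).mp h) hk0.ne'
    · exact absurd ((hq.getVert_eq_end_iff hk.le).mp h) hk.ne
    · exact h.2
  have haq : a ∉ q.support := fun ha => by
    rcases hp a (hqp ha) with h | h | h
    · exact G.ne_of_adj hax h
    · exact G.ne_of_adj hay h
    · exact h.1 rfl
  let c : G.Walk a a := .cons hax (q.concat hay.symm)
  have hc : c.IsCycle := by
    refine (Walk.cons_isCycle_iff _ _).mpr ⟨hq.concat haq _, fun h => ?_⟩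
    rw [Walk.edges_concat, List.concat_eq_append, List.mem_append, List.mem_singleton] at h
    rcases h with h | h
    · exact haq (q.fst_mem_support_of_mem_edges h)
    · simp only [Sym2.eq, Sym2.rel_iff', Prod.mk.injEq] at h
      rcases h with ⟨rfl, -⟩ | ⟨-, rfl⟩
      · exact G.ne_of_adj hay rfl
      · exact hxy rfl
  have hclen : c.length = q.length + 2 := by simp [c]
  have hcq : ∀ k ≤ q.length, c.getVert (k + 1) = q.getVert k := fun k hk => by
    simp [c, Walk.concat_eq_append, Walk.getVert_append', hk]
  obtain ⟨i, j, hij, hj, hne, hadj⟩ := hG c hc (by omega)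
  rw [hclen] at hj hne
  obtain ⟨j, rfl⟩ : ∃ j', j = j' + 1 := ⟨j - 1, by omega⟩
  rw [hcq j (by omega)] at hadj
  rcases i with _ | i
  · exact hinner j (by omega) (by omega) hadj
  · rw [hcq i (by omega)] at hadj
    exact hchordless i j (by omega) (by omega) hadj

end IsChordal

namespace SimpleGraph

variable {V : Type*} {G : SimpleGraph V}

lemma isClique_neighborSet_of_induce {s : Set V} {v : s} (hs : G.neighborSet v ⊆ s)
    (hv : (G.induce s).IsClique ((G.induce s).neighborSet v)) :
    G.IsClique (G.neighborSet v) := fun u hu w hw huw =>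
  hv (x := ⟨u, hs hu⟩) (y := ⟨w, hs hw⟩) hu hw (fun h => huw (congrArg Subtype.val h))

lemma exists_isClique_neighborSet_notMem
    (h : ∀ a b, a ≠ b → ¬G.Adj a b → ∃ v, v ≠ a ∧ ¬G.Adj a v ∧ G.IsClique (G.neighborSet v))
    {S : Set V} (hS : G.IsClique S) {b : V} (hb : b ∉ S) :
    ∃ v ∉ S, G.IsClique (G.neighborSet v) := by
  by_cases hcomplete : ∀ z w, z ≠ w → G.Adj z w
  · exact ⟨b, hb, fun z _ w _ hzw => hcomplete z w hzw⟩
  push Not at hcomplete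
  obtain ⟨z, w, hzw, hnzw⟩ := hcomplete
  obtain ⟨u, huz, hnzu, hu⟩ := h z w hzw hnzw
  obtain ⟨v, hvu, hnuv, hv⟩ := h u z huz (fun h => hnzu h.symm)
  by_cases huS : u ∈ S
  · exact ⟨v, fun hvS => hnuv (hS huS hvS hvu.symm), hv⟩
  · exact ⟨u, huS, hu⟩

def IsPerfectEliminationOrdering {ι : Type*} [LT ι] (G : SimpleGraph V) (σ : ι ≃ V) : Prop :=
  ∀ i j k, i < j → j < k → G.Adj (σ i) (σ j) → G.Adj (σ i) (σ k) → G.Adj (σ j) (σ k)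

namespace IsPerfectEliminationOrdering

lemma adj_of_le {ι : Type*} [LinearOrder ι] {σ : ι ≃ V} (hσ : G.IsPerfectEliminationOrdering σ)
    {u v w : V} (huv : σ.symm u ≤ σ.symm v) (huw : σ.symm u ≤ σ.symm w) (hv : G.Adj u v)
    (hw : G.Adj u w) (hvw : v ≠ w) : G.Adj v w := by
  have huv' := huv.lt_of_ne (σ.symm.injective.ne (G.ne_of_adj hv))
  have huw' := huw.lt_of_ne (σ.symm.injective.ne (G.ne_of_adj hw))
  rcases lt_or_gt_of_ne (σ.symm.injective.ne hvw) with hlt | hlt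
  · simpa using hσ _ _ _ huv' hlt (by simpa using hv) (by simpa using hw)
  · simpa using (hσ _ _ _ huw' hlt (by simpa using hw) (by simpa using hv)).symm

theorem isChordal {ι : Type*} [LinearOrder ι] {σ : ι ≃ V}
    (hσ : G.IsPerfectEliminationOrdering σ) : IsChordal G := by
  intro v w hw hlen
  set m := w.length
  obtain ⟨t, ht, hmin⟩ := (Finset.range m).exists_min_image (fun s => σ.symm (w.getVert s))
    ⟨0, by simp; omega⟩
  rw [Finset.mem_range] at ht
  have key : ∀ s₁ s₂, s₁ < m → s₂ < m → s₁ ≠ s₂ → G.Adj (w.getVert t) (w.getVert s₁) →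
      G.Adj (w.getVert t) (w.getVert s₂) → G.Adj (w.getVert s₁) (w.getVert s₂) :=
    fun s₁ s₂ h₁ h₂ h₁₂ ha₁ ha₂ => hσ.adj_of_le (hmin s₁ (by simpa)) (hmin s₂ (by simpa)) ha₁ ha₂
      (fun h => h₁₂ (hw.getVert_injOn' (by simp; omega) (by simp; omega) h))
  have hsucc : G.Adj (w.getVert t) (w.getVert (t + 1)) := w.adj_getVert_succ ht
  have hpred : 0 < t → G.Adj (w.getVert t) (w.getVert (t - 1)) := fun ht0 => by
    simpa [Nat.sub_add_cancel ht0] using (w.adj_getVert_succ (i := t - 1) (by omega)).symm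
  have hwrap : G.Adj (w.getVert 0) (w.getVert (m - 1)) := by
    simpa using (w.adj_penultimate hw.not_nil).symm
  rcases Nat.eq_zero_or_pos t with rfl | ht0
  · exact ⟨1, m - 1, by omega, by omega, by omega, key 1 (m - 1) (by omega) (by omega) (by omega)
      (by simpa using hsucc) hwrap⟩
  by_cases htm : t = m - 1
  · subst htm
    refine ⟨0, m - 2, by omega, by omega, by omega, (key _ _ (by omega) (by omega) ?_ ?_ ?_).symm⟩
    · omega
    · simpa [show m - 1 - 1 = m - 2 by omega] using hpred ht0
    · simpa [show m - 1 + 1 = m by omega, m] using hsucc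
  · exact ⟨t - 1, t + 1, by omega, by omega, by omega,
      key _ _ (by omega) (by omega) (by omega) (hpred ht0) hsucc⟩

lemma cons [DecidableEq V] {n : ℕ} {v : V} (hv : G.IsClique (G.neighborSet v))
    {τ : Fin n ≃ {u // u ≠ v}} (hτ : (G.induce {u | u ≠ v}).IsPerfectEliminationOrdering τ) :
    G.IsPerfectEliminationOrdering
      ((finSuccEquiv n).trans ((Equiv.optionCongr τ).trans (Equiv.optionSubtypeNe v))) := by
  intro i j k hij hjk
  obtain ⟨j, rfl⟩ := Fin.exists_succ_eq.mpr ((Fin.zero_le i).trans_lt hij).ne'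
  obtain ⟨k, rfl⟩ := Fin.exists_succ_eq.mpr ((Fin.zero_le _).trans_lt hjk).ne'
  cases i using Fin.cases with
  | zero =>
    simp only [Equiv.trans_apply, finSuccEquiv_zero, finSuccEquiv_succ, Equiv.optionCongr_apply,
      Option.map_none, Option.map_some, Equiv.optionSubtypeNe_none, Equiv.optionSubtypeNe_some]
    exact fun hj hk => hv hj hk (Subtype.val_injective.ne (τ.injective.ne
      (Fin.succ_lt_succ_iff.mp hjk).ne))
  | succ i =>
    simp only [Equiv.trans_apply, finSuccEquiv_succ, Equiv.optionCongr_apply, Option.map_some,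
      Equiv.optionSubtypeNe_some]
    exact hτ i j k (Fin.succ_lt_succ_iff.mp hij) (Fin.succ_lt_succ_iff.mp hjk)

end IsPerfectEliminationOrdering

end SimpleGraph

namespace IsChordal

open SimpleGraph

variable {V : Type*} {G : SimpleGraph V}

theorem exists_isClique_neighborSet_of_not_adj [Finite V] (hG : IsChordal G) {a b : V}
    (hab : a ≠ b) (hnab : ¬G.Adj a b) :
    ∃ v, v ≠ a ∧ ¬G.Adj a v ∧ G.IsClique (G.neighborSet v) := by
  induction hn : Nat.card V using Nat.strong_induction_on generalizing V with
  | _ n ih =>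
  let U : Set V := {v | v ≠ a ∧ ¬G.Adj a v}
  let C : Set V := {v | ∃ p : G.Walk b v, ∀ z ∈ p.support, z ∈ U}
  let S : Set V := {s | s ∉ C ∧ ∃ c ∈ C, G.Adj s c}
  have hCU : C ⊆ U := fun v ⟨p, hp⟩ => hp v p.end_mem_support
  have hbC : b ∈ C := ⟨.nil, by simpa [U] using ⟨hab.symm, hnab⟩⟩
  have hSa : ∀ s ∈ S, G.Adj a s := by
    rintro s ⟨hsC, c, ⟨p, hp⟩, hsc⟩
    by_contra hnas
    have hsa : s ≠ a := by rintro rfl; exact (hCU ⟨p, hp⟩).2 hsc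
    refine hsC ⟨p.concat hsc.symm, fun z hz => ?_⟩
    simp only [Walk.support_concat, List.mem_append, List.mem_singleton] at hz
    rcases hz with hz | rfl
    · exact hp z hz
    · exact ⟨hsa, hnas⟩
  have hS : G.IsClique S := by
    rintro x ⟨hxC, c, ⟨p, hp⟩, hxc⟩ y ⟨hyC, d, ⟨q, hq⟩, hyd⟩ hxy
    refine hG.adj_of_common_neighbor_of_walk (hSa x ⟨hxC, c, ⟨p, hp⟩, hxc⟩)
      (hSa y ⟨hyC, d, ⟨q, hq⟩, hyd⟩) hxy (.cons hxc ((p.reverse.append q).concat hyd.symm)) ?_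
    intro z hz
    simp only [Walk.support_cons, Walk.support_concat, Walk.support_append, Walk.support_reverse,
      List.mem_cons, List.mem_append, List.mem_reverse, List.not_mem_nil, or_false] at hz
    rcases hz with rfl | ((hz | hz) | rfl)
    · exact .inl rfl
    · exact .inr (.inr (hp z hz))
    · exact .inr (.inr (hq z (List.mem_of_mem_tail hz)))
    · exact .inr (.inl rfl)
  let T : Set V := C ∪ S
  have hnbr : ∀ c ∈ C, G.neighborSet c ⊆ T := fun c hc w hw => by
    by_cases hwC : w ∈ C
    · exact .inl hwC
    · exact .inr ⟨hwC, c, hc, hw.symm⟩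
  have haT : a ∉ T := by
    rintro (haC | haS)
    · exact (hCU haC).1 rfl
    · exact G.irrefl (hSa a haS)
  obtain ⟨⟨v, hvT⟩, hvS, hv⟩ := exists_isClique_neighborSet_notMem
    (fun a' b' hab' hnab' => ih _ (hn ▸ Finite.card_subtype_lt haT)
      (hG.of_embedding (Embedding.induce T)) hab' hnab' rfl)
    (S := Subtype.val ⁻¹' S) (fun x hx y hy hxy => hS hx hy (Subtype.val_injective.ne hxy))
    (b := ⟨b, .inl hbC⟩) (fun h => h.1 hbC)
  have hvC : v ∈ C := hvT.resolve_right hvS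
  exact ⟨v, (hCU hvC).1, (hCU hvC).2, isClique_neighborSet_of_induce (hnbr v hvC) hv⟩

theorem exists_isClique_neighborSet [Finite V] [Nonempty V] (hG : IsChordal G) :
    ∃ v, G.IsClique (G.neighborSet v) := by
  by_cases hcomplete : ∀ a b, a ≠ b → G.Adj a b
  · exact ⟨Classical.arbitrary V, fun a _ b _ hab => hcomplete a b hab⟩
  push Not at hcomplete
  obtain ⟨a, b, hab, hnab⟩ := hcomplete
  obtain ⟨v, -, -, hv⟩ := hG.exists_isClique_neighborSet_of_not_adj hab hnab
  exact ⟨v, hv⟩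

theorem exists_perfectEliminationOrdering [Finite V] (hG : IsChordal G) :
    ∃ σ : Fin (Nat.card V) ≃ V, G.IsPerfectEliminationOrdering σ := by
  classical
  induction hn : Nat.card V generalizing V with
  | zero =>
    have : IsEmpty V := (Nat.card_eq_zero.mp hn).resolve_right (not_infinite_iff_finite.mpr ‹_›)
    exact ⟨Equiv.equivOfIsEmpty _ _, fun i => i.elim0⟩
  | succ n ih =>
    have : Nonempty V := (Nat.card_pos_iff.mp (by omega)).1
    obtain ⟨v, hv⟩ := hG.exists_isClique_neighborSet
    have hcard : Nat.card {u // u ≠ v} = n := by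
      have := Nat.card_congr (Equiv.optionSubtypeNe v)
      rw [Finite.card_option] at this
      omega
    obtain ⟨τ, hτ⟩ := ih (hG.of_embedding (Embedding.induce {u | u ≠ v})) hcard
    exact ⟨_, IsPerfectEliminationOrdering.cons hv hτ⟩

end IsChordal

/-- A finite graph is chordal if and only if it has a perfect elimination ordering: an
ordering `v₁ ≺ ⋯ ≺ vₙ` of the vertices such that for `i < j < k`, if `vᵢ` is adjacent to
both `vⱼ` and `vₖ` then `vⱼ` is adjacent to `vₖ`. -/
theorem isChordal_iff_perfect_elimination_ordering
    {V : Type*} [Fintype V] (Γ : SimpleGraph V) :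
    IsChordal Γ ↔
      ∃ σ : Fin (Fintype.card V) ≃ V,
        ∀ i j k : Fin (Fintype.card V), i < j → j < k →
          Γ.Adj (σ i) (σ j) → Γ.Adj (σ i) (σ k) → Γ.Adj (σ j) (σ k) := by
  rw [← Nat.card_eq_fintype_card]
  exact ⟨fun h => h.exists_perfectEliminationOrdering, fun ⟨_, hσ⟩ =>
    SimpleGraph.IsPerfectEliminationOrdering.isChordal hσ⟩
end

section
/- Let v be a simplicial vertex of a graph Γ with vertex set V, and Q a positive semidefinite Hermitian matrix indexed by V that is sparse with respect to Γ (Q(u,w) = 0 for non-adjacent u ≠ w) with Q(v,v) ≠ 0. Define M_v by M_v(v₁,v₂) = Q(v₁,v₂) when one of v₁,v₂ equals v and the other is in adj(v) ∪ {v}; M_v(v₁,v₂) = Q(v,v)^{-1} Q(v₁,v) conj(Q(v₂,v)) for v₁,v₂ ∈ adj(v); and 0 otherwise. Then both M_v and Q − M_v are positive semidefinite, and the row and column of Q − M_v indexed by v are zero. -/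
/-!
By sparsity, the column of `Q` at `v` vanishes outside the closed neighbourhood of `v`, so `M` is
the rank-one matrix `(Q v v)⁻¹ q qᴴ` with `q` that column, which is positive semidefinite because
`Q v v > 0`. Its complement `Q - M` is the Schur complement of `Q v v`: with `P` the elementary
matrix eliminating row `v` against the pivot `Q v v`, one has `Q - M = Pᴴ Q P`.
-/

open scoped BigOperators ComplexOrder

namespace Matrix

variable {n 𝕜 : Type*}

section Field

variable [Field 𝕜] (Q : Matrix n n 𝕜) (v : n)

def schurUpdate : Matrix n n 𝕜 :=
  (Q v v)⁻¹ • vecMulVec (Q.col v) (Q.row v)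

lemma schurUpdate_apply (a b : n) : Q.schurUpdate v a b = (Q v v)⁻¹ * (Q a v * Q v b) := rfl

variable {Q}

lemma sub_schurUpdate_apply_self_left (hQ : Q v v ≠ 0) (b : n) :
    (Q - Q.schurUpdate v) v b = 0 := by
  rw [sub_apply, schurUpdate_apply, inv_mul_cancel_left₀ hQ, sub_self]

lemma sub_schurUpdate_apply_self_right (hQ : Q v v ≠ 0) (a : n) :
    (Q - Q.schurUpdate v) a v = 0 := by
  rw [sub_apply, schurUpdate_apply, mul_comm (Q a v), inv_mul_cancel_left₀ hQ, sub_self]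

variable [Fintype n] [DecidableEq n]

lemma mul_sub_vecMulVec_single_eq_sub_schurUpdate :
    Q * (1 - (Q v v)⁻¹ • vecMulVec (Pi.single v 1) (Q.row v)) = Q - Q.schurUpdate v := by
  rw [Matrix.mul_sub, Matrix.mul_one, Matrix.mul_smul, mul_vecMulVec, mulVec_single_one]
  rfl

lemma conjTranspose_mul_mul_eq_sub_schurUpdate [StarRing 𝕜] (hQ : Q v v ≠ 0) :
    (1 - (Q v v)⁻¹ • vecMulVec (Pi.single v 1) (Q.row v))ᴴ * Q *
      (1 - (Q v v)⁻¹ • vecMulVec (Pi.single v 1) (Q.row v)) = Q - Q.schurUpdate v := by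
  have hrow : Pi.single v 1 ᵥ* (Q - Q.schurUpdate v) = 0 := by
    rw [single_one_vecMul]
    exact funext (sub_schurUpdate_apply_self_left v hQ)
  -- `Pᴴ` only subtracts multiples of row `v`, which vanishes in `Q * P = Q - Q.schurUpdate v`.
  rw [Matrix.mul_assoc, mul_sub_vecMulVec_single_eq_sub_schurUpdate]
  simp [Matrix.sub_mul, vecMulVec_mul, hrow]

end Field

variable [Fintype n] [RCLike 𝕜] {Q : Matrix n n 𝕜}

lemma PosSemidef.schurUpdate (hQ : Q.PosSemidef) (v : n) : (Q.schurUpdate v).PosSemidef := by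
  have hrow : Q.row v = star (Q.col v) := funext fun b => (hQ.isHermitian.apply v b).symm
  rw [Matrix.schurUpdate, hrow]
  exact (posSemidef_vecMulVec_self_star _).smul (inv_nonneg_of_nonneg hQ.diag_nonneg)

lemma PosSemidef.sub_schurUpdate [DecidableEq n] (hQ : Q.PosSemidef) {v : n} (hv : Q v v ≠ 0) :
    (Q - Q.schurUpdate v).PosSemidef :=
  conjTranspose_mul_mul_eq_sub_schurUpdate v hv ▸ hQ.conjTranspose_mul_mul_same _

end Matrix

open Matrix in
theorem simplicial_schur_update_posSemidef_general
    {V : Type*} [Fintype V] [DecidableEq V]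
    (Γ : SimpleGraph V) [DecidableRel Γ.Adj]
    (v : V)
    (Q : Matrix V V ℂ) (hQ : Q.PosSemidef)
    (hsparse : ∀ u w : V, u ≠ w → ¬Γ.Adj u w → Q u w = 0)
    (hvv : Q v v ≠ 0)
    (M : Matrix V V ℂ)
    (hM : ∀ a b : V,
      M a b =
        if (a = v ∧ (b = v ∨ Γ.Adj v b)) ∨ (b = v ∧ (a = v ∨ Γ.Adj v a)) then Q a b
        else if Γ.Adj v a ∧ Γ.Adj v b then (Q v v)⁻¹ * Q a v * (starRingEnd ℂ) (Q b v)
        else 0) :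
    M.PosSemidef ∧ (Q - M).PosSemidef ∧
      ∀ u : V, (Q - M) v u = 0 ∧ (Q - M) u v = 0 := by
  have hcol (u : V) (hu : u ≠ v) (hvu : ¬Γ.Adj v u) : Q u v = 0 :=
    hsparse u v hu fun h => hvu h.symm
  have hrow (u : V) (hu : u ≠ v) (hvu : ¬Γ.Adj v u) : Q v u = 0 :=
    hsparse v u hu.symm hvu
  have hMS : M = Q.schurUpdate v := by
    ext a b
    rw [hM, schurUpdate_apply]
    split_ifs with hnear hadj
    · rcases hnear with ⟨rfl, -⟩ | ⟨rfl, -⟩ <;> field_simp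
    · rw [starRingEnd_apply, hQ.isHermitian.apply, mul_assoc]
    · grind
  subst hMS
  exact ⟨hQ.schurUpdate v, hQ.sub_schurUpdate hvv, fun u =>
    ⟨sub_schurUpdate_apply_self_left v hvv u, sub_schurUpdate_apply_self_right v hvv u⟩⟩

/-- The Schur-complement-type update at a simplicial vertex: both `M_v` and `Q − M_v` are
positive semidefinite, and the row and column of `Q − M_v` indexed by `v` vanish. -/
theorem simplicial_schur_update_posSemidef
    {V : Type*} [Fintype V] [DecidableEq V]
    (Γ : SimpleGraph V) [DecidableRel Γ.Adj]
    (v : V) (hv : IsSimplicial Γ v)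
    (Q : Matrix V V ℂ) (hQ : Q.PosSemidef)
    (hsparse : ∀ u w : V, u ≠ w → ¬Γ.Adj u w → Q u w = 0)
    (hvv : Q v v ≠ 0)
    (M : Matrix V V ℂ)
    (hM : ∀ a b : V,
      M a b =
        if (a = v ∧ (b = v ∨ Γ.Adj v b)) ∨ (b = v ∧ (a = v ∨ Γ.Adj v a)) then Q a b
        else if Γ.Adj v a ∧ Γ.Adj v b then (Q v v)⁻¹ * Q a v * (starRingEnd ℂ) (Q b v)
        else 0) :
    M.PosSemidef ∧ (Q - M).PosSemidef ∧
      ∀ u : V, (Q - M) v u = 0 ∧ (Q - M) u v = 0 :=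
  simplicial_schur_update_posSemidef_general Γ v Q hQ hsparse hvv M hM
end

section
/- Every positive semidefinite Hermitian matrix Q that is sparse with respect to a chordal graph Γ with maximal cliques C₁,…,C_p can be decomposed as Q = ∑_{k=1}^p Q_k, where each Q_k is positive semidefinite and the nonzero entries of Q_k lie only in rows and columns indexed by the clique C_k. -/
open scoped BigOperators ComplexOrder

/-!
Eliminate a simplicial vertex. By Dirac's lemma a finite chordal graph has a vertex `v` whose
neighbours form a clique: a minimal separator `S` of two non-adjacent vertices is a clique, since
shortest paths between two vertices of `S` through the two sides of `S` close up to a cycle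
whose only possible chord is the edge between them, and induction on one side together with `S`
produces the vertex. For a positive semidefinite `Q` with the sparsity of the graph, the rank-one
term `Q e_v e_vᴴ Q / Q v v` is positive semidefinite and supported on the clique `{v} ∪ N(v)`,
hence on some maximal clique, while the Schur complement `Q` minus that term is positive
semidefinite, keeps the sparsity pattern and vanishes in row and column `v`. Induction on the
support finishes the proof.
-/

namespace SimpleGraph

variable {V : Type*} {G : SimpleGraph V}

namespace Walk

lemma exists_length_lt_of_adj_getVert {u v : V} (p : G.Walk u v) {i j : ℕ} (hij : i + 2 ≤ j)
    (hj : j ≤ p.length) (h : G.Adj (p.getVert i) (p.getVert j)) :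
    ∃ q : G.Walk u v, q.length < p.length ∧ ∀ z ∈ q.support, z ∈ p.support := by
  refine ⟨(p.take i).append (.cons h (p.drop j)), ?_, fun z hz => ?_⟩
  · simp only [length_append, take_length, length_cons, drop_length]
    omega
  · rw [mem_support_append_iff, support_cons, List.mem_cons, support_take,
      drop_support_eq_support_drop_min] at hz
    rcases hz with hz | rfl | hz
    · exact List.mem_of_mem_take hz
    · exact p.getVert_mem_support i
    · exact List.mem_of_mem_drop hz

lemma two_le_length {a b : V} (r : G.Walk a b) (hab : a ≠ b) (h : ¬G.Adj a b) :
    2 ≤ r.length := by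
  by_contra! hr
  interval_cases hl : r.length
  · exact hab (eq_of_length_eq_zero hl)
  · exact h (exists_length_eq_one_iff.1 ⟨r, hl⟩)

lemma IsPath.getVert_mem {x y : V} {A : Set V} {p : G.Walk x y} (hp : p.IsPath)
    (hpA : ∀ z ∈ p.support, z ∈ insert x (insert y A)) {i : ℕ} (hi₀ : 0 < i)
    (hi : i < p.length) : p.getVert i ∈ A := by
  rcases hpA _ (p.getVert_mem_support i) with h | h | h
  · exact absurd ((hp.getVert_eq_start_iff hi.le).1 h) hi₀.ne'
  · exact absurd ((hp.getVert_eq_end_iff hi.le).1 h) hi.ne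
  · exact h

lemma IsPath.start_notMem_support_tail {x y : V} {p : G.Walk x y} (hp : p.IsPath) :
    x ∉ p.support.tail := by
  have := hp.support_nodup
  rw [← cons_tail_support] at this
  exact (List.nodup_cons.1 this).1

end Walk

def ReachableIn (G : SimpleGraph V) (s : Set V) (u v : V) : Prop :=
  ∃ p : G.Walk u v, ∀ z ∈ p.support, z ∈ s

namespace ReachableIn

variable {s t : Set V} {a b u v w : V}

lemma refl (hu : u ∈ s) : G.ReachableIn s u u := ⟨.nil, by simpa⟩

lemma symm (h : G.ReachableIn s u v) : G.ReachableIn s v u :=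
  let ⟨p, hp⟩ := h
  ⟨p.reverse, fun z hz => hp z (by simpa using hz)⟩

lemma trans (h : G.ReachableIn s u v) (h' : G.ReachableIn s v w) : G.ReachableIn s u w :=
  let ⟨p, hp⟩ := h
  let ⟨q, hq⟩ := h'
  ⟨p.append q, fun z hz => (Walk.mem_support_append_iff _ _).1 hz |>.elim (hp z) (hq z)⟩

lemma mono (hst : s ⊆ t) (h : G.ReachableIn s u v) : G.ReachableIn t u v :=
  let ⟨p, hp⟩ := h
  ⟨p, fun z hz => hst (hp z hz)⟩

lemma mem_right (h : G.ReachableIn s u v) : v ∈ s :=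
  let ⟨p, hp⟩ := h
  hp v p.end_mem_support

lemma of_adj (h : G.Adj u v) (hu : u ∈ s) (hv : v ∈ s) : G.ReachableIn s u v :=
  ⟨h.toWalk, fun z hz => by
    rcases (by simpa using hz : z = u ∨ z = v) with rfl | rfl <;> assumption⟩

lemma of_insert {x : V} (h : G.ReachableIn (insert x s) a b) (ha : a ∈ s) :
    G.ReachableIn s a b ∨ ∃ y, G.Adj x y ∧ G.ReachableIn s a y := by
  obtain ⟨p, hp⟩ := h
  induction p with
  | nil => exact .inl (.refl ha)
  | @cons a c b hac q ih =>
    rcases hp c (by simp) with rfl | hc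
    · exact .inr ⟨a, hac.symm, .refl ha⟩
    · have hstep : G.ReachableIn s a c := .of_adj hac ha hc
      rcases ih hc (fun z hz => hp z (by simp [hz])) with h | ⟨y, hxy, hy⟩
      · exact .inl (hstep.trans h)
      · exact .inr ⟨y, hxy, hstep.trans hy⟩

lemma not_pair (hab : a ≠ b) (h : ¬G.Adj a b) : ¬G.ReachableIn {a, b} a b := by
  intro hr
  rw [Set.pair_comm] at hr
  rcases hr.of_insert rfl with hr | ⟨y, hby, hy⟩
  · exact hab hr.mem_right.symm
  · rw [hy.mem_right] at hby
    exact h hby.symm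

lemma reachableIn_setOf (hu : G.ReachableIn s a u) (hv : G.ReachableIn s a v) :
    G.ReachableIn {z | G.ReachableIn s a z} u v := by
  classical
  obtain ⟨p, hp⟩ := hu.symm.trans hv
  exact ⟨p, fun z hz => hu.trans
    ⟨p.takeUntil z hz, fun w hw => hp w (p.support_takeUntil_subset_support hz hw)⟩⟩

lemma exists_isPath_forall_not_adj_getVert (h : G.ReachableIn s u v) :
    ∃ p : G.Walk u v, (∀ z ∈ p.support, z ∈ s) ∧ p.IsPath ∧
      ∀ i j, i + 2 ≤ j → j ≤ p.length → ¬G.Adj (p.getVert i) (p.getVert j) := by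
  classical
  have hex : ∃ n, ∃ p : G.Walk u v, p.length = n ∧ ∀ z ∈ p.support, z ∈ s :=
    let ⟨p, hp⟩ := h
    ⟨_, p, rfl, hp⟩
  obtain ⟨p, hpn, hps⟩ := Nat.find_spec hex
  have hbs : ∀ z ∈ p.bypass.support, z ∈ s :=
    fun z hz => hps z (p.support_bypass_subset_support hz)
  refine ⟨p.bypass, hbs, p.bypass_isPath, fun i j hij hj hadj => ?_⟩
  obtain ⟨q, hlt, hq⟩ := p.bypass.exists_length_lt_of_adj_getVert hij hj hadj
  have := Nat.find_min' hex ⟨q, rfl, fun z hz => hbs z (hq z hz)⟩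
  have := p.length_bypass_le_length
  omega

lemma insert_insert_of_adj {X : Set V} {a u w x y : V} (hu : G.ReachableIn X a u)
    (hw : G.ReachableIn X a w) (hxu : G.Adj x u) (hyw : G.Adj y w) :
    G.ReachableIn (insert x (insert y {z | G.ReachableIn X a z})) x y := by
  have hsub : {z | G.ReachableIn X a z} ⊆ insert x (insert y {z | G.ReachableIn X a z}) :=
    fun z hz => .inr (.inr hz)
  exact (of_adj hxu (.inl rfl) (hsub hu)).trans
    (((hu.reachableIn_setOf hw).mono hsub).trans (.of_adj hyw.symm (hsub hw) (.inr (.inl rfl))))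

end ReachableIn

lemma exists_minimal_separator {s : Finset V} {a b : V} (hab : a ≠ b) (h : ¬G.Adj a b) :
    ∃ S : Finset V, S ⊆ s ∧ a ∉ S ∧ b ∉ S ∧ ¬G.ReachableIn (↑s \ ↑S) a b ∧
      ∀ x ∈ S, G.ReachableIn (insert x (↑s \ ↑S)) a b := by
  classical
  have h₀ : ¬G.ReachableIn (↑s \ ↑((s.erase a).erase b)) a b := fun hr =>
    ReachableIn.not_pair hab h (hr.mono fun z hz => by by_contra! hz'; simp_all)
  obtain ⟨S, hS₀, hSmin⟩ := exists_minimal_le_of_wellFoundedLT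
    (fun S : Finset V => ¬G.ReachableIn (↑s \ ↑S) a b) _ h₀
  have hSs : S ⊆ (s.erase a).erase b := hS₀
  refine ⟨S, hSs.trans ((Finset.erase_subset _ _).trans (Finset.erase_subset _ _)),
    fun haS => by simpa using hSs haS, fun hbS => by simpa using hSs hbS, hSmin.prop,
    fun x hx => ?_⟩
  by_contra hx'
  have hle : S ⊆ S.erase x := hSmin.le_of_le (y := S.erase x)
    (fun hr => hx' (hr.mono fun z hz => by by_contra! hz'; simp_all)) (Finset.erase_subset x S)
  simpa using hle hx

end SimpleGraph

namespace IsChordal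

open SimpleGraph

variable {V : Type*} {G : SimpleGraph V}

lemma exists_adj_of_append (hG : IsChordal G) {x y : V} {p : G.Walk x y}
    {q : G.Walk y x} (hc : (p.append q).IsCycle) (hlen : 4 ≤ p.length + q.length) :
    (∃ i j, i + 2 ≤ j ∧ j ≤ p.length ∧ G.Adj (p.getVert i) (p.getVert j)) ∨
    (∃ i j, i + 2 ≤ j ∧ j ≤ q.length ∧ G.Adj (q.getVert i) (q.getVert j)) ∨
    ∃ i j, 0 < i ∧ i < p.length ∧ 0 < j ∧ j < q.length ∧ G.Adj (p.getVert i) (q.getVert j) := by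
  obtain ⟨i, j, hij, hj, hend, hadj⟩ := hG _ hc (by simpa using hlen)
  simp only [Walk.length_append] at hj hend
  rw [Walk.getVert_append', Walk.getVert_append'] at hadj
  by_cases hjp : j ≤ p.length
  · rw [if_pos (by omega), if_pos hjp] at hadj
    exact .inl ⟨i, j, hij, hjp, hadj⟩
  rw [if_neg hjp] at hadj
  by_cases hip : i ≤ p.length
  · rw [if_pos hip] at hadj
    rcases Nat.eq_zero_or_pos i with rfl | hi₀
    · refine .inr (.inl ⟨j - p.length, q.length, by omega, le_rfl, ?_⟩)
      simpa using hadj.symm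
    · rcases hip.eq_or_lt with rfl | hip
      · refine .inr (.inl ⟨0, j - p.length, by omega, by omega, ?_⟩)
        simpa using hadj
      · exact .inr (.inr ⟨i, j - p.length, hi₀, hip, by omega, by omega, hadj⟩)
  · rw [if_neg hip] at hadj
    exact .inr (.inl ⟨i - p.length, j - p.length, by omega, by omega, hadj⟩)

lemma adj_of_reachableIn_of_reachableIn (hG : IsChordal G) {A B : Set V} {x y : V}
    (hxy : x ≠ y) (hAB : Disjoint A B) (hnadj : ∀ u ∈ A, ∀ w ∈ B, ¬G.Adj u w)
    (hxA : x ∉ A) (hyA : y ∉ A)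
    (hA : G.ReachableIn (insert x (insert y A)) x y)
    (hB : G.ReachableIn (insert y (insert x B)) y x) :
    G.Adj x y := by
  by_contra hxy'
  obtain ⟨p, hpA, hp, hpchord⟩ := hA.exists_isPath_forall_not_adj_getVert
  obtain ⟨q, hqB, hq, hqchord⟩ := hB.exists_isPath_forall_not_adj_getVert
  have hdisj : p.support.tail.Disjoint q.support.tail := by
    intro z hzp hzq
    rcases hpA z (List.mem_of_mem_tail hzp) with rfl | rfl | hzA
    · exact hp.start_notMem_support_tail hzp
    · exact hq.start_notMem_support_tail hzq
    · rcases hqB z (List.mem_of_mem_tail hzq) with rfl | rfl | hzB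
      · exact hyA hzA
      · exact hxA hzA
      · exact hAB.ne_of_mem hzA hzB rfl
  have hp₂ := p.two_le_length hxy hxy'
  have hq₂ := q.two_le_length hxy.symm (hxy' ∘ G.adj_symm)
  rcases hG.exists_adj_of_append (hp.isCycle_append hq hdisj (by omega)) (by omega) with
    ⟨i, j, hij, hj, h⟩ | ⟨i, j, hij, hj, h⟩ | ⟨i, j, hi₀, hi, hj₀, hj, h⟩
  · exact hpchord i j hij hj h
  · exact hqchord i j hij hj h
  · exact hnadj _ (hp.getVert_mem hpA hi₀ hi) _ (hq.getVert_mem hqB hj₀ hj) h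

lemma isClique_of_forall_reachableIn_insert (hG : IsChordal G) {X S : Set V} {a b : V}
    (ha : a ∈ X) (hb : b ∈ X) (hsep : ¬G.ReachableIn X a b) (hSX : Disjoint S X)
    (hS : ∀ x ∈ S, G.ReachableIn (insert x X) a b) : G.IsClique S := by
  have hAB : Disjoint {z | G.ReachableIn X a z} {z | G.ReachableIn X b z} :=
    Set.disjoint_left.2 fun z hza hzb => hsep (hza.trans hzb.symm)
  have hnadj : ∀ u ∈ {z | G.ReachableIn X a z}, ∀ w ∈ {z | G.ReachableIn X b z}, ¬G.Adj u w :=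
    fun u hu w hw h => hsep (hu.trans ((ReachableIn.of_adj h hu.mem_right hw.mem_right).trans
      (Set.mem_ofPred.1 hw).symm))
  have hnbr : ∀ x ∈ S, ∀ c ∈ ({a, b} : Set V), ∃ u, G.ReachableIn X c u ∧ G.Adj x u := by
    rintro x hx c (rfl | rfl)
    · rcases (hS x hx).of_insert ha with h | ⟨u, hxu, hu⟩
      exacts [absurd h hsep, ⟨u, hu, hxu⟩]
    · rcases (hS x hx).symm.of_insert hb with h | ⟨u, hxu, hu⟩
      exacts [absurd h.symm hsep, ⟨u, hu, hxu⟩]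
  have hSA : ∀ x ∈ S, x ∉ {z | G.ReachableIn X a z} :=
    fun x hx hxa => hSX.ne_of_mem hx (Set.mem_ofPred.1 hxa).mem_right rfl
  intro x hx y hy hxy
  obtain ⟨ux, hux, hxux⟩ := hnbr x hx a (.inl rfl)
  obtain ⟨uy, huy, hyuy⟩ := hnbr y hy a (.inl rfl)
  obtain ⟨wx, hwx, hxwx⟩ := hnbr x hx b (.inr rfl)
  obtain ⟨wy, hwy, hywy⟩ := hnbr y hy b (.inr rfl)
  exact hG.adj_of_reachableIn_of_reachableIn hxy hAB hnadj (hSA x hx) (hSA y hy)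
    (hux.insert_insert_of_adj huy hxux hyuy) (hwy.insert_insert_of_adj hwx hywy hxwx)

lemma exists_isClique_neighborSet_inter_of_separator {s S T : Finset V} {a b : V}
    (ih : ∀ t ⊂ s, ∀ {T : Finset V}, G.IsClique (T : Set V) → ¬t ⊆ T →
      ∃ v ∈ t, v ∉ T ∧ G.IsClique (G.neighborSet v ∩ t))
    (ha : a ∈ s) (haS : a ∉ S) (hb : b ∈ s) (hbS : b ∉ S) (hSs : S ⊆ s)
    (hS : G.IsClique (S : Set V)) (hsep : ¬G.ReachableIn (↑s \ ↑S) a b)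
    (hT : ∀ t ∈ T, ¬G.ReachableIn (↑s \ ↑S) a t) :
    ∃ v ∈ s, v ∉ T ∧ G.IsClique (G.neighborSet v ∩ s) := by
  classical
  -- Neighbours in `s` of a vertex of the component `A` of `a` lie in `A ∪ S`.
  set A := s.filter fun z => G.ReachableIn (↑s \ ↑S) a z
  have hAs : A ⊆ s := Finset.filter_subset _ s
  have hsub : A ∪ S ⊂ s := Finset.ssubset_iff_of_subset (Finset.union_subset hAs hSs) |>.2
    ⟨b, hb, by simp [A, hsep, hbS]⟩
  have haA : a ∈ A :=
    Finset.mem_filter.2 ⟨ha, .refl (show a ∈ (↑s \ ↑S : Set V) from ⟨ha, haS⟩)⟩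
  obtain ⟨v, hv, hvS, hvs⟩ := ih _ hsub hS fun h => haS ((h (Finset.mem_union_left S haA)))
  have hav : G.ReachableIn (↑s \ ↑S) a v :=
    (Finset.mem_filter.1 ((Finset.mem_union.1 hv).resolve_right hvS)).2
  refine ⟨v, hav.mem_right.1, fun hvT => hT v hvT hav, hvs.subset ?_⟩
  rintro z ⟨hvz, hzs⟩
  refine ⟨hvz, ?_⟩
  by_cases hzS : z ∈ S
  · simp [hzS]
  · have haz : G.ReachableIn (↑s \ ↑S) a z := hav.trans (.of_adj hvz hav.mem_right ⟨hzs, hzS⟩)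
    exact Finset.mem_union_left S (Finset.mem_filter.2 ⟨hzs, haz⟩)

theorem exists_isClique_neighborSet_inter (hG : IsChordal G) (s : Finset V) {T : Finset V}
    (hT : G.IsClique (T : Set V)) (hsT : ¬s ⊆ T) :
    ∃ v ∈ s, v ∉ T ∧ G.IsClique (G.neighborSet v ∩ s) := by
  induction s using Finset.strongInduction generalizing T with
  | H s ih =>
  by_cases hs : G.IsClique (s : Set V)
  · obtain ⟨v, hv, hvT⟩ := Finset.not_subset.1 hsT
    exact ⟨v, hv, hvT, hs.subset Set.inter_subset_right⟩
  obtain ⟨a, ha, b, hb, hab, hnadj⟩ : ∃ a ∈ s, ∃ b ∈ s, a ≠ b ∧ ¬G.Adj a b := by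
    simpa [IsClique, Set.Pairwise] using hs
  obtain ⟨S, hSs, haS, hbS, hsep, hmin⟩ := exists_minimal_separator (s := s) hab hnadj
  have hS : G.IsClique (S : Set V) := hG.isClique_of_forall_reachableIn_insert
    (X := ↑s \ ↑S) ⟨ha, haS⟩ ⟨hb, hbS⟩ hsep Set.disjoint_sdiff_right hmin
  have hTside : (∀ t ∈ T, ¬G.ReachableIn (↑s \ ↑S) a t) ∨
      ∀ t ∈ T, ¬G.ReachableIn (↑s \ ↑S) b t := by
    by_contra! h
    obtain ⟨⟨t, ht, hat⟩, t', ht', hbt'⟩ := h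
    refine hsep (hat.trans (?_ : G.ReachableIn _ t t') |>.trans hbt'.symm)
    rcases eq_or_ne t t' with rfl | htt'
    · exact .refl hat.mem_right
    · exact .of_adj (hT ht ht' htt') hat.mem_right hbt'.mem_right
  rcases hTside with hTa | hTb
  · exact exists_isClique_neighborSet_inter_of_separator ih ha haS hb hbS hSs hS hsep hTa
  · exact exists_isClique_neighborSet_inter_of_separator ih hb hbS ha haS hSs hS
      (fun h => hsep h.symm) hTb

end IsChordal

namespace Matrix

section Support

variable {n R : Type*}

def SupportedOn [Zero R] (A : Matrix n n R) (s : Set n) : Prop :=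
  ∀ u w, A u w ≠ 0 → u ∈ s ∧ w ∈ s

def IsSparseFor [Zero R] (G : SimpleGraph n) (A : Matrix n n R) : Prop :=
  ∀ u w, u ≠ w → ¬G.Adj u w → A u w = 0

namespace SupportedOn

variable {A B : Matrix n n R} {s t : Set n}

lemma zero [Zero R] : (0 : Matrix n n R).SupportedOn s := fun _ _ h => absurd rfl h

lemma mono [Zero R] (hA : A.SupportedOn s) (hst : s ⊆ t) : A.SupportedOn t :=
  fun u w h => (hA u w h).imp (@hst u) (@hst w)

lemma add [AddZeroClass R] (hA : A.SupportedOn s) (hB : B.SupportedOn s) :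
    (A + B).SupportedOn s := by
  intro u w h
  by_cases hAuw : A u w = 0
  · exact hB u w (by simpa [hAuw] using h)
  · exact hA u w hAuw

lemma sub [AddGroup R] (hA : A.SupportedOn s) (hB : B.SupportedOn s) :
    (A - B).SupportedOn s := by
  intro u w h
  by_cases hAuw : A u w = 0
  · exact hB u w (by simpa [hAuw] using h)
  · exact hA u w hAuw

lemma isSparseFor [Zero R] {G : SimpleGraph n} (hA : A.SupportedOn s) (hs : G.IsClique s) :
    A.IsSparseFor G := fun u w huw hadj => by
  by_contra h
  exact hadj (hs (hA u w h).1 (hA u w h).2 huw)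

end SupportedOn

lemma IsSparseFor.sub [AddGroup R] {G : SimpleGraph n} {A B : Matrix n n R}
    (hA : A.IsSparseFor G) (hB : B.IsSparseFor G) : (A - B).IsSparseFor G :=
  fun u w huw hadj => by simp [hA u w huw hadj, hB u w huw hadj]

end Support

section Pivot

variable {n K : Type*} [DivisionRing K]

/-- For `Q v v = 0` this is the zero matrix, since `x / 0 = 0`; for positive semidefinite `Q`
column `v` vanishes then anyway. -/
def pivotTerm (Q : Matrix n n K) (v : n) : Matrix n n K :=
  of fun u w => Q u v * Q v w / Q v v

lemma pivotTerm_apply_ne_zero {Q : Matrix n n K} {u v w : n} (h : Q.pivotTerm v u w ≠ 0) :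
    Q u v ≠ 0 ∧ Q v w ≠ 0 := by
  simp only [pivotTerm, of_apply, ne_eq, div_eq_zero_iff, mul_eq_zero, not_or] at h
  exact h.1

lemma pivotTerm_supportedOn {G : SimpleGraph n} {Q : Matrix n n K} {s : Set n}
    (hQs : Q.SupportedOn s) (hQG : Q.IsSparseFor G) (v : n) :
    (Q.pivotTerm v).SupportedOn (insert v (G.neighborSet v ∩ s)) := by
  intro u w h
  obtain ⟨huv, hvw⟩ := pivotTerm_apply_ne_zero h
  constructor
  · by_cases hu : u = v
    · exact .inl hu
    · have hadj : G.Adj u v := by_contra fun hadj => huv (hQG u v hu hadj)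
      exact .inr ⟨hadj.symm, (hQs u v huv).1⟩
  · by_cases hw : w = v
    · exact .inl hw
    · have hadj : G.Adj v w := by_contra fun hadj => hvw (hQG v w (Ne.symm hw) hadj)
      exact .inr ⟨hadj, (hQs v w hvw).2⟩

end Pivot

namespace PosSemidef

variable {n 𝕜 : Type*} [Fintype n] [RCLike 𝕜] {Q : Matrix n n 𝕜}

lemma apply_eq_zero_of_diag_eq_zero (hQ : Q.PosSemidef) {v : n} (h : Q v v = 0) (u : n) :
    Q u v = 0 := by
  classical
  have hzero : star (Pi.single v 1) ⬝ᵥ Q *ᵥ Pi.single v (1 : 𝕜) = 0 := by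
    simpa [mulVec_single] using h
  simpa [mulVec_single] using congrFun ((hQ.dotProduct_mulVec_zero_iff _).1 hzero) u

lemma pivotTerm (hQ : Q.PosSemidef) (v : n) : (Q.pivotTerm v).PosSemidef := by
  have hpiv : Q.pivotTerm v = (Q v v)⁻¹ • vecMulVec (fun u => Q u v) (star fun u => Q u v) := by
    ext u w
    simp [Matrix.pivotTerm, vecMulVec_apply, ← hQ.1.apply v w]
    ring
  rw [hpiv]
  refine (posSemidef_vecMulVec_self_star _).smul ?_
  rcases (hQ.diag_nonneg (i := v)).eq_or_lt with h | h
  · simp [← h]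
  · exact (RCLike.inv_pos.2 h).le

lemma sub_pivotTerm_apply_left (hQ : Q.PosSemidef) (v w : n) : (Q - Q.pivotTerm v) v w = 0 := by
  by_cases h : Q v v = 0
  · have : Q v w = 0 := by rw [← hQ.1.apply, hQ.apply_eq_zero_of_diag_eq_zero h, star_zero]
    simp [Matrix.pivotTerm, this]
  · simp [Matrix.pivotTerm, h]

lemma sub_pivotTerm_apply_right (hQ : Q.PosSemidef) (u v : n) :
    (Q - Q.pivotTerm v) u v = 0 := by
  by_cases h : Q v v = 0
  · simp [Matrix.pivotTerm, hQ.apply_eq_zero_of_diag_eq_zero h]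
  · simp [Matrix.pivotTerm, h]

lemma sub_pivotTerm_supportedOn (hQ : Q.PosSemidef) {s : Set n} (hQs : Q.SupportedOn s)
    (v : n) : (Q - Q.pivotTerm v).SupportedOn (s \ {v}) := by
  intro u w h
  have hP : (Q.pivotTerm v).SupportedOn s := fun u w h =>
    ⟨(hQs u v (pivotTerm_apply_ne_zero h).1).1, (hQs v w (pivotTerm_apply_ne_zero h).2).2⟩
  obtain ⟨hu, hw⟩ := hQs.sub hP u w h
  refine ⟨⟨hu, ?_⟩, ⟨hw, ?_⟩⟩
  · rintro rfl
    exact h (hQ.sub_pivotTerm_apply_left u w)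
  · rintro rfl
    exact h (hQ.sub_pivotTerm_apply_right u w)

/-- The Schur complement `Q - Q.pivotTerm v` is the congruence `Mᴴ * Q * M` for the elimination
matrix `M`; `Mᴴ` acts trivially because row `v` of `Q * M` vanishes. -/
lemma sub_pivotTerm (hQ : Q.PosSemidef) (v : n) : (Q - Q.pivotTerm v).PosSemidef := by
  classical
  set M : Matrix n n 𝕜 := 1 - of fun u w => if u = v then Q v w / Q v v else 0
  have hQM : Q * M = Q - Q.pivotTerm v := by
    rw [mul_sub, mul_one]
    congr 1
    ext u w
    simp [Matrix.pivotTerm, mul_apply, mul_div_assoc]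
  have hMQM : Mᴴ * (Q * M) = Q * M := by
    rw [conjTranspose_sub, conjTranspose_one, sub_mul, Matrix.one_mul, sub_eq_self]
    ext u w
    rw [mul_apply, zero_apply]
    refine Finset.sum_eq_zero fun j _ => ?_
    by_cases hj : j = v
    · rw [hj, hQM, hQ.sub_pivotTerm_apply_left, mul_zero]
    · simp [M, hj]
  rw [← hQM, ← hMQM, ← Matrix.mul_assoc]
  exact hQ.conjTranspose_mul_mul_same M

theorem exists_eq_sum_supportedOn_of_isChordal {V ι : Type*} [Fintype V] [Fintype ι]
    {G : SimpleGraph V} (hG : IsChordal G) {C : ι → Set V}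
    (hC : ∀ K, G.IsClique K → ∃ k, K ⊆ C k) (s : Finset V) {Q : Matrix V V 𝕜}
    (hQ : Q.PosSemidef) (hQs : Q.SupportedOn s) (hQG : Q.IsSparseFor G) :
    ∃ R : ι → Matrix V V 𝕜, Q = ∑ k, R k ∧ ∀ k, (R k).PosSemidef ∧ (R k).SupportedOn (C k) := by
  classical
  induction s using Finset.strongInduction generalizing Q with
  | H s ih =>
  rcases s.eq_empty_or_nonempty with rfl | hs
  · have hQ0 : Q = 0 := by
      ext u w
      by_contra h
      simpa using (hQs u w h).1
    exact ⟨0, by simp [hQ0], fun _ => ⟨.zero, .zero⟩⟩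
  obtain ⟨v, hv, -, hvs⟩ := hG.exists_isClique_neighborSet_inter s (T := ∅) (by simp)
    (by simpa using hs.ne_empty)
  have hK : G.IsClique (insert v (G.neighborSet v ∩ s)) := hvs.insert fun _ h _ => h.1
  obtain ⟨k₀, hk₀⟩ := hC _ hK
  have hP := pivotTerm_supportedOn hQs hQG v
  have hQ's : (Q - Q.pivotTerm v).SupportedOn ↑(s.erase v) := by
    rw [Finset.coe_erase]
    exact hQ.sub_pivotTerm_supportedOn hQs v
  obtain ⟨R, hR, hRk⟩ := ih _ (Finset.erase_ssubset hv) (hQ.sub_pivotTerm v) hQ's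
    (hQG.sub (hP.isSparseFor hK))
  refine ⟨R + Pi.single k₀ (Q.pivotTerm v), ?_, fun k => ?_⟩
  · simp only [Pi.add_apply]
    rw [Finset.sum_add_distrib, ← hR, Fintype.sum_pi_single', sub_add_cancel]
  · obtain ⟨hRpsd, hRsupp⟩ := hRk k
    rcases eq_or_ne k k₀ with rfl | hk
    · simpa using ⟨hRpsd.add (hQ.pivotTerm v), hRsupp.add (hP.mono hk₀)⟩
    · simpa [hk] using ⟨hRpsd, hRsupp⟩

end PosSemidef

end Matrix

theorem chordal_psd_clique_decomposition_general
    {V : Type*} [Fintype V]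
    (Γ : SimpleGraph V) (hΓ : IsChordal Γ)
    (p : ℕ) (C : Fin p → Finset V)
    (hall : ∀ D : Finset V, Γ.IsClique (D : Set V) →
      (∀ D' : Finset V, Γ.IsClique (D' : Set V) → D ⊆ D' → D = D') → ∃ k : Fin p, C k = D)
    (Q : Matrix V V ℂ) (hQ : Q.PosSemidef)
    (hsparse : ∀ u w : V, u ≠ w → ¬Γ.Adj u w → Q u w = 0) :
    ∃ Qk : Fin p → Matrix V V ℂ,
      Q = ∑ k : Fin p, Qk k ∧
      ∀ k : Fin p, (Qk k).PosSemidef ∧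
        ∀ u w : V, Qk k u w ≠ 0 → u ∈ C k ∧ w ∈ C k := by
  classical
  have hcover : ∀ K : Set V, Γ.IsClique K → ∃ k, K ⊆ C k := by
    intro K hK
    obtain ⟨D, hKD, hD⟩ := Finite.exists_le_maximal (p := fun D : Finset V => Γ.IsClique ↑D)
      (a := K.toFinset) (by simpa using hK)
    obtain ⟨k, hk⟩ := hall D hD.prop fun D' hD' hDD' => le_antisymm hDD' (hD.le_of_ge hD' hDD')
    exact ⟨k, by simpa [hk] using hKD⟩
  exact hQ.exists_eq_sum_supportedOn_of_isChordal hΓ hcover Finset.univ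
    (fun u w _ => ⟨Finset.mem_univ u, Finset.mem_univ w⟩) hsparse

/-- Clique decomposition of positive semidefinite matrices with chordal sparsity pattern:
`Q = ∑ₖ Qₖ` with each `Qₖ` positive semidefinite and supported on the maximal clique `Cₖ`. -/
theorem chordal_psd_clique_decomposition
    {V : Type*} [Fintype V] [DecidableEq V]
    (Γ : SimpleGraph V) (hΓ : IsChordal Γ)
    (p : ℕ) (C : Fin p → Finset V)
    (hclique : ∀ k : Fin p, Γ.IsClique (C k : Set V) ∧
      ∀ D : Finset V, Γ.IsClique (D : Set V) → C k ⊆ D → C k = D)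
    (hall : ∀ D : Finset V, Γ.IsClique (D : Set V) →
      (∀ D' : Finset V, Γ.IsClique (D' : Set V) → D ⊆ D' → D = D') → ∃ k : Fin p, C k = D)
    (Q : Matrix V V ℂ) (hQ : Q.PosSemidef)
    (hsparse : ∀ u w : V, u ≠ w → ¬Γ.Adj u w → Q u w = 0) :
    ∃ Qk : Fin p → Matrix V V ℂ,
      Q = ∑ k : Fin p, Qk k ∧
      ∀ k : Fin p, (Qk k).PosSemidef ∧
        ∀ u w : V, Qk k u w ≠ 0 → u ∈ C k ∧ w ∈ C k :=
  chordal_psd_clique_decomposition_general Γ hΓ p C hall Q hQ hsparse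
end

section
/- For every positive integer n, the function p_n: (ℤ_n)^{n+1} → ℝ defined by p_n(x₁,…,x_{n+1}) = ∑_{1≤i<j≤n+1} [x_i = x_j] satisfies the identity p_n = (n+1)/(2n) + ∑_{k=1}^{n-1} (1/(2n)) |∑_{i=1}^{n+1} χ_k(x_i)|², where χ_k(x) = exp(2πikx/n). In particular p_n(x) > 1/2 > 0 for all x, giving a Fourier sum-of-squares proof of the pigeon-hole principle. -/
open scoped BigOperators Real

lemma char_sum (n : ℕ) (ζ : ℂ) (hζ : IsPrimitiveRoot ζ n) (d : ℤ) :
    ∑ k ∈ Finset.range n, (ζ ^ d) ^ k = if (n : ℤ) ∣ d then (n : ℂ) else 0 := by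
  by_cases h : (n : ℤ) ∣ d
  · have h1 : ζ ^ d = 1 := (hζ.zpow_eq_one_iff_dvd d).2 h
    simp [h1, h]
  · have h1 : ζ ^ d ≠ 1 := fun hc => h ((hζ.zpow_eq_one_iff_dvd d).1 hc)
    rw [geom_sum_eq h1]
    have : (ζ ^ d) ^ n = 1 := by
      rw [← zpow_natCast (ζ ^ d) n, ← zpow_mul, mul_comm, zpow_mul, zpow_natCast,
        hζ.pow_eq_one, one_zpow]
    simp [this, h]

lemma key (n : ℕ) (hn : 0 < n) (x : Fin (n + 1) → ZMod n) :
    ∑ k ∈ Finset.range n, (Complex.normSq (∑ i : Fin (n + 1),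
        Complex.exp (2 * (π : ℂ) * Complex.I * (k : ℂ) * ((x i).val : ℂ) / (n : ℂ))) : ℝ)
      = n * ∑ i : Fin (n + 1), ∑ j : Fin (n + 1), (if x i = x j then (1 : ℝ) else 0) := by
  haveI : NeZero n := ⟨hn.ne'⟩
  set ζ : ℂ := Complex.exp (2 * π * Complex.I / n) with hζdef
  have hζ : IsPrimitiveRoot ζ n := Complex.isPrimitiveRoot_exp n hn.ne'
  have hζ0 : ζ ≠ 0 := Complex.exp_ne_zero _
  set c : Fin (n + 1) → ℤ := fun i => ((x i).val : ℤ) with hc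
  have hexp : ∀ (k : ℕ) (i : Fin (n + 1)),
      Complex.exp (2 * (π : ℂ) * Complex.I * (k : ℂ) * ((x i).val : ℂ) / (n : ℂ))
        = ζ ^ ((k : ℤ) * c i) := by
    intro k i
    have h1 : (k : ℤ) * c i = ((k * (x i).val : ℕ) : ℤ) := by push_cast; ring
    rw [h1, zpow_natCast, hζdef, ← Complex.exp_nat_mul]
    congr 1
    have hne : (n : ℂ) ≠ 0 := by exact_mod_cast hn.ne'
    push_cast
    field_simp
  have hconj : (starRingEnd ℂ) ζ = ζ⁻¹ := by
    rw [hζdef, ← Complex.exp_conj, ← Complex.exp_neg]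
    congr 1
    simp only [map_div₀, map_mul, Complex.conj_I, Complex.conj_ofReal, map_ofNat, map_natCast]
    ring
  have hconjpow : ∀ m : ℤ, (starRingEnd ℂ) (ζ ^ m) = ζ ^ (-m) := by
    intro m
    rw [map_zpow₀, hconj, inv_zpow, ← zpow_neg]
  have main : ∑ k ∈ Finset.range n, ((Complex.normSq (∑ i : Fin (n + 1),
        Complex.exp (2 * (π : ℂ) * Complex.I * (k : ℂ) * ((x i).val : ℂ) / (n : ℂ))) : ℂ))
      = n * ∑ i : Fin (n + 1), ∑ j : Fin (n + 1), (if x i = x j then (1 : ℂ) else 0) := by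
    have step1 : ∀ k ∈ Finset.range n, ((Complex.normSq (∑ i : Fin (n + 1),
        Complex.exp (2 * (π : ℂ) * Complex.I * (k : ℂ) * ((x i).val : ℂ) / (n : ℂ))) : ℂ))
        = ∑ i : Fin (n + 1), ∑ j : Fin (n + 1), (ζ ^ (c i - c j)) ^ k := by
      intro k _
      rw [← Complex.mul_conj]
      simp only [hexp]
      rw [map_sum, Finset.sum_mul_sum]
      refine Finset.sum_congr rfl fun i _ => Finset.sum_congr rfl fun j _ => ?_
      rw [hconjpow, ← zpow_add₀ hζ0, ← zpow_natCast (ζ ^ (c i - c j)), ← zpow_mul]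
      congr 1
      ring
    rw [Finset.sum_congr rfl step1, Finset.sum_comm]
    rw [Finset.mul_sum]
    refine Finset.sum_congr rfl fun i _ => ?_
    rw [Finset.sum_comm, Finset.mul_sum]
    refine Finset.sum_congr rfl fun j _ => ?_
    rw [char_sum n ζ hζ (c i - c j)]
    have hiff : (n : ℤ) ∣ c i - c j ↔ x i = x j := by
      rw [← ZMod.intCast_zmod_eq_zero_iff_dvd]
      simp only [hc]
      push_cast
      rw [sub_eq_zero]
      simp [ZMod.natCast_val, ZMod.cast_id]
    by_cases h : x i = x j <;> simp [hiff, h]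
  rw [show (∑ i : Fin (n + 1), ∑ j : Fin (n + 1), (if x i = x j then (1 : ℂ) else 0))
      = ((∑ i : Fin (n + 1), ∑ j : Fin (n + 1), (if x i = x j then (1 : ℝ) else 0) : ℝ) : ℂ) from by
    push_cast
    exact Finset.sum_congr rfl fun i _ => Finset.sum_congr rfl fun j _ => (by split <;> simp)] at main
  exact_mod_cast main

/-- The FSOS certificate for the pigeon-hole principle: the pair-collision counting
function `p_n` on `(ℤ_n)^(n+1)` equals `(n+1)/(2n)` plus a sum of Hermitian squares of
characters, hence is everywhere greater than `1/2`. -/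
theorem pigeonhole_fsos
    (n : ℕ) (hn : 0 < n)
    (p : (Fin (n + 1) → ZMod n) → ℝ)
    (hp : ∀ x : Fin (n + 1) → ZMod n,
      p x = ∑ i : Fin (n + 1), ∑ j : Fin (n + 1),
        if i < j then (if x i = x j then (1 : ℝ) else 0) else 0) :
    ∀ x : Fin (n + 1) → ZMod n,
      (p x = (n + 1) / (2 * n) +
        ∑ k ∈ Finset.Icc 1 (n - 1), (1 / (2 * n)) *
          (‖(∑ i : Fin (n + 1),
            Complex.exp (2 * (π : ℂ) * Complex.I * (k : ℂ) * ((x i).val : ℂ) / (n : ℂ)))‖) ^ 2)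
      ∧ 1 / 2 < p x := by
  intro x
  set S : ℕ → ℂ := fun k => ∑ i : Fin (n + 1),
    Complex.exp (2 * (π : ℂ) * Complex.I * (k : ℂ) * ((x i).val : ℂ) / (n : ℂ)) with hS
  -- full double sum
  have hN : (∑ i : Fin (n + 1), ∑ j : Fin (n + 1), (if x i = x j then (1 : ℝ) else 0))
      = 2 * p x + (n + 1) := by
    have hsplit : ∀ i j : Fin (n + 1), (if x i = x j then (1 : ℝ) else 0)
        = (if i < j then (if x i = x j then (1 : ℝ) else 0) else 0)
          + (if i = j then (1 : ℝ) else 0)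
          + (if j < i then (if x i = x j then (1 : ℝ) else 0) else 0) := by
      intro i j
      rcases lt_trichotomy i j with h | h | h
      · simp [h, h.ne, h.ne', not_lt_of_gt h]
      · simp [h, lt_irrefl]
      · simp [h, h.ne, h.ne', not_lt_of_gt h]
    rw [Finset.sum_congr rfl fun i _ => Finset.sum_congr rfl fun j _ => hsplit i j]
    simp only [Finset.sum_add_distrib]
    have hdiag : (∑ i : Fin (n + 1), ∑ j : Fin (n + 1), (if i = j then (1 : ℝ) else 0))
        = (n + 1 : ℝ) := by
      simp [Finset.sum_ite_eq]
    have hgt : (∑ i : Fin (n + 1), ∑ j : Fin (n + 1),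
          (if j < i then (if x i = x j then (1 : ℝ) else 0) else 0)) = p x := by
      rw [Finset.sum_comm, hp x]
      refine Finset.sum_congr rfl fun i _ => Finset.sum_congr rfl fun j _ => ?_
      by_cases h : i < j <;> simp [h, eq_comm]
    rw [hdiag, hgt, ← hp x]
    ring
  -- decompose range n
  have hrange : Finset.range n = insert 0 (Finset.Icc 1 (n - 1)) := by
    ext k
    simp only [Finset.mem_range, Finset.mem_insert, Finset.mem_Icc]
    omega
  have h0 : (0 : ℕ) ∉ Finset.Icc 1 (n - 1) := by simp
  have hS0 : Complex.normSq (S 0) = ((n : ℝ) + 1) ^ 2 := by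
    have : S 0 = ((n + 1 : ℕ) : ℂ) := by
      show (∑ i : Fin (n + 1),
        Complex.exp (2 * (π : ℂ) * Complex.I * ((0:ℕ) : ℂ) * ((x i).val : ℂ) / (n : ℂ))) = _
      simp only [Nat.cast_zero, mul_zero, zero_mul, zero_div, Complex.exp_zero,
        Finset.sum_const, Finset.card_univ, Fintype.card_fin, nsmul_eq_mul, mul_one]
    rw [this, Complex.normSq_natCast]
    push_cast
    ring
  have key' : ∑ k ∈ Finset.range n, Complex.normSq (S k) = n * (2 * p x + (n + 1)) := by
    rw [← hN]
    exact key n hn x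
  have hT : ∑ k ∈ Finset.Icc 1 (n - 1), Complex.normSq (S k)
      = n * (2 * p x + (n + 1)) - ((n : ℝ) + 1) ^ 2 := by
    rw [hrange, Finset.sum_insert h0, hS0] at key'
    linarith
  have hnR : (n : ℝ) ≠ 0 := by exact_mod_cast hn.ne'
  have hid : p x = (n + 1) / (2 * n) +
      ∑ k ∈ Finset.Icc 1 (n - 1), (1 / (2 * n)) * (‖S k‖) ^ 2 := by
    have habs : ∀ k, (‖S k‖) ^ 2 = Complex.normSq (S k) := fun k => Complex.sq_norm _
    simp only [habs, ← Finset.mul_sum, hT]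
    field_simp
    ring
  refine ⟨hid, ?_⟩
  have hnonneg : (0 : ℝ) ≤ ∑ k ∈ Finset.Icc 1 (n - 1), (1 / (2 * n)) *
      (‖S k‖) ^ 2 := by
    refine Finset.sum_nonneg fun k _ => ?_
    positivity
  have hhalf : (1 : ℝ) / 2 < (n + 1) / (2 * n) := by
    rw [div_lt_div_iff₀ (by norm_num) (by positivity)]
    have : (1 : ℝ) ≤ n := by exact_mod_cast hn
    nlinarith
  calc (1 : ℝ) / 2 < (n + 1) / (2 * n) := hhalf
    _ ≤ _ := le_add_of_nonneg_right hnonneg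
  |>.trans_eq hid.symm
end

section
/- The Motzkin polynomial M(x,y) = x⁴y² + x²y⁴ − 3x²y² + 1 satisfies, for all θ, ψ ∈ ℝ, M(2cos θ, 2cos ψ) = |e^{2i(θ+ψ)} + e^{−2iθ} + e^{−2iψ} + e^{2i(θ−ψ)} + 2e^{2iθ} + e^{2iψ} + 2|². In particular M(x,y) ≥ 0 for all (x,y) ∈ [−2,2] × [−2,2]. -/
open scoped Real

/-- The Motzkin polynomial. -/
def motzkin (x y : ℝ) : ℝ := x ^ 4 * y ^ 2 + x ^ 2 * y ^ 4 - 3 * x ^ 2 * y ^ 2 + 1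

theorem key_s17 : ∀ θ ψ : ℝ,
      motzkin (2 * Real.cos θ) (2 * Real.cos ψ) =
        (‖
          (Complex.exp (2 * Complex.I * ((θ : ℂ) + (ψ : ℂ))) +
           Complex.exp (-(2 * Complex.I * (θ : ℂ))) +
           Complex.exp (-(2 * Complex.I * (ψ : ℂ))) +
           Complex.exp (2 * Complex.I * ((θ : ℂ) - (ψ : ℂ))) +
           2 * Complex.exp (2 * Complex.I * (θ : ℂ)) +
           Complex.exp (2 * Complex.I * (ψ : ℂ)) + 2)‖) ^ 2 := by
  intro θ ψ
  have h : ∀ t : ℝ, Complex.exp (2 * Complex.I * (t : ℂ)) =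
      Complex.ofReal (Real.cos (2*t)) + Complex.ofReal (Real.sin (2*t)) * Complex.I := by
    intro t
    rw [show (2 : ℂ) * Complex.I * (t:ℂ) = ((2*t : ℝ):ℂ) * Complex.I by push_cast; ring,
      Complex.exp_mul_I]
    norm_cast
  rw [Complex.sq_norm]
  have e1 := h (θ + ψ)
  have e2 := h (θ - ψ)
  have e3 := h θ
  have e4 := h ψ
  have e5 : Complex.exp (-(2 * Complex.I * (θ:ℂ))) =
      Complex.ofReal (Real.cos (2*θ)) - Complex.ofReal (Real.sin (2*θ)) * Complex.I := by
    rw [show -(2 * Complex.I * (θ:ℂ)) = 2 * Complex.I * ((-θ : ℝ):ℂ) by push_cast; ring, h]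
    rw [show 2*(-θ) = -(2*θ) by ring, Real.cos_neg, Real.sin_neg]
    push_cast; ring
  have e6 : Complex.exp (-(2 * Complex.I * (ψ:ℂ))) =
      Complex.ofReal (Real.cos (2*ψ)) - Complex.ofReal (Real.sin (2*ψ)) * Complex.I := by
    rw [show -(2 * Complex.I * (ψ:ℂ)) = 2 * Complex.I * ((-ψ : ℝ):ℂ) by push_cast; ring, h]
    rw [show 2*(-ψ) = -(2*ψ) by ring, Real.cos_neg, Real.sin_neg]
    push_cast; ring
  rw [show ((θ:ℂ)+(ψ:ℂ)) = (((θ+ψ):ℝ):ℂ) by push_cast; ring] at *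
  rw [show ((θ:ℂ)-(ψ:ℂ)) = (((θ-ψ):ℝ):ℂ) by push_cast; ring]
  rw [e1, e2, e3, e4, e5, e6]
  simp only [Complex.normSq_apply, Complex.add_re, Complex.add_im, Complex.sub_re,
    Complex.sub_im, Complex.mul_re, Complex.mul_im, Complex.ofReal_re, Complex.ofReal_im,
    Complex.I_re, Complex.I_im, Complex.re_ofNat, Complex.im_ofNat]
  rw [show (2:ℝ)*(θ+ψ) = 2*θ + 2*ψ by ring, show (2:ℝ)*(θ-ψ) = 2*θ - 2*ψ by ring]
  simp only [Real.cos_add, Real.sin_add, Real.cos_sub, Real.sin_sub,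
    Real.cos_two_mul', Real.sin_two_mul, motzkin]
  have p1 : Real.sin θ ^ 2 = 1 - Real.cos θ ^ 2 := Real.sin_sq θ
  have p2 : Real.sin ψ ^ 2 = 1 - Real.cos ψ ^ 2 := Real.sin_sq ψ
  linear_combination ((3 + 8*(Real.cos ψ)^2 + 4*(Real.cos ψ)^4 - 8*(Real.sin ψ)^2 - 8*(Real.sin ψ)^2*(Real.cos ψ)^2 + 4*(Real.sin ψ)^4 + 23*(Real.cos θ)^2 + 20*(Real.cos θ)^2*(Real.cos ψ)^2 - 4*(Real.cos θ)^2*(Real.cos ψ)^4 - 20*(Real.cos θ)^2*(Real.sin ψ)^2 + 8*(Real.cos θ)^2*(Real.sin ψ)^2*(Real.cos ψ)^2 - 4*(Real.cos θ)^2*(Real.sin ψ)^4 - 9*(Real.sin θ)^2 - 12*(Real.sin θ)^2*(Real.cos ψ)^2 - 4*(Real.sin θ)^2*(Real.cos ψ)^4 + 12*(Real.sin θ)^2*(Real.sin ψ)^2 + 8*(Real.sin θ)^2*(Real.sin ψ)^2*(Real.cos ψ)^2 - 4*(Real.sin θ)^2*(Real.sin ψ)^4)) * p1 + ((-8*(Real.cos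 θ)^2 + 48*(Real.cos θ)^2*(Real.cos ψ)^2 - 16*(Real.cos θ)^2*(Real.sin ψ)^2 + 32*(Real.cos θ)^4)) * p2

/-- A single-Hermitian-square certificate for the Motzkin polynomial on `[-2,2] × [-2,2]`:
`M(2cos θ, 2cos ψ)` is the squared modulus of a trigonometric polynomial; in particular
`M ≥ 0` on the box. -/
theorem motzkin_hermitian_square_certificate :
    (∀ θ ψ : ℝ,
      motzkin (2 * Real.cos θ) (2 * Real.cos ψ) =
        (‖
          (Complex.exp (2 * Complex.I * ((θ : ℂ) + (ψ : ℂ))) +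
           Complex.exp (-(2 * Complex.I * (θ : ℂ))) +
           Complex.exp (-(2 * Complex.I * (ψ : ℂ))) +
           Complex.exp (2 * Complex.I * ((θ : ℂ) - (ψ : ℂ))) +
           2 * Complex.exp (2 * Complex.I * (θ : ℂ)) +
           Complex.exp (2 * Complex.I * (ψ : ℂ)) + 2)‖) ^ 2) ∧
    (∀ x y : ℝ, x ∈ Set.Icc (-2 : ℝ) 2 → y ∈ Set.Icc (-2 : ℝ) 2 → 0 ≤ motzkin x y) := by
  refine ⟨key_s17, ?_⟩
  intro x y hx hy
  obtain ⟨hx1, hx2⟩ := hx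
  obtain ⟨hy1, hy2⟩ := hy
  have hxc : x = 2 * Real.cos (Real.arccos (x/2)) := by
    rw [Real.cos_arccos (by linarith) (by linarith)]; ring
  have hyc : y = 2 * Real.cos (Real.arccos (y/2)) := by
    rw [Real.cos_arccos (by linarith) (by linarith)]; ring
  rw [hxc, hyc, key_s17]
  positivity
end
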